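/- arXiv:0808.0265 — 14 statements merged into one kernel-verified Lean document; each statement's English description precedes it below -/
import Mathlib

section
/- Let a, b be Moore-Penrose invertible elements in a ring with involution such that aa†b = b and (a†bb†a)* = a†bb†a. Then d = (1 - bb†)a is Moore-Penrose invertible with d† = a†(1 - bb†). -/
/-- If `a, b` are MP-invertible with `a a† b = b` and `(a† b b† a)* = a† b b† a`,
then `d = (1 - b b†) a` is MP-invertible with `d† = a† (1 - b b†)`. -/
theorem d_mp_invertible {R : Type*} [Ring R] [StarRing R] (a a' b b' : R)
    (ha₁ : a * a' * a = a) (ha₂ : a' * a * a' = a')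
    (ha₃ : star (a * a') = a * a') (ha₄ : star (a' * a) = a' * a)
    (hb₁ : b * b' * b = b) (hb₂ : b' * b * b' = b')
    (hb₃ : star (b * b') = b * b') (hb₄ : star (b' * b) = b' * b)
    (hab : a * a' * b = b)
    (hsym : star (a' * b * b' * a) = a' * b * b' * a) :
    let d := (1 - b * b') * a
    let d' := a' * (1 - b * b')
    d * d' * d = d ∧ d' * d * d' = d' ∧
      star (d * d') = d * d' ∧ star (d' * d) = d' * d := by
  intro d d'
  set p := b * b' with hp
  have hpp : p * p = p := by rw [hp, ← mul_assoc, hb₁]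
  have hps : star p = p := hb₃
  have h1 : a * a' * p = p := by rw [hp, ← mul_assoc, hab]
  have h2 : p * (a * a') = p := by
    have := congrArg star h1
    rwa [star_mul, ha₃, hps] at this
  -- d * d' = a*a' - p
  have hdd' : d * d' = a * a' - p := by
    show (1 - p) * a * (a' * (1 - p)) = a * a' - p
    have e : (1 - p) * a * (a' * (1 - p))
        = a * a' - a * a' * p - p * (a * a') + p * (a * a') * p := by noncomm_ring
    rw [e, h1, h2, hpp]
    abel
  -- (1-p)*(a*a'-p) = a*a' - p
  have hE : (1 - p) * (a * a' - p) = a * a' - p := by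
    have e : (1 - p) * (a * a' - p) = a * a' - p - p * (a * a') + p * p := by noncomm_ring
    rw [e, h2, hpp]; abel
  -- (a*a'-p)*(1-p) = a*a' - p
  have hE' : (a * a' - p) * (1 - p) = a * a' - p := by
    have e : (a * a' - p) * (1 - p) = a * a' - p - a * a' * p + p * p := by noncomm_ring
    rw [e, h1, hpp]; abel
  have hd'd : d' * d = a' * a - a' * b * b' * a := by
    show a' * (1 - p) * ((1 - p) * a) = a' * a - a' * b * b' * a
    have e : a' * (1 - p) * ((1 - p) * a)
        = a' * a - a' * p * a - a' * p * a + a' * (p * p) * a := by noncomm_ring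
    rw [e, hpp, hp]
    have e2 : a' * (b * b') * a = a' * b * b' * a := by noncomm_ring
    rw [e2]; abel
  refine ⟨?_, ?_, ?_, ?_⟩
  · -- d * d' * d = d
    rw [hdd']
    show (a * a' - p) * ((1 - p) * a) = (1 - p) * a
    rw [← mul_assoc, hE']
    have e : (a * a' - p) * a = a * a' * a - p * a := by noncomm_ring
    rw [e, ha₁]; noncomm_ring
  · -- d' * d * d' = d'
    rw [mul_assoc, hdd']
    show a' * (1 - p) * (a * a' - p) = a' * (1 - p)
    rw [mul_assoc, hE]
    have e : a' * (a * a' - p) = a' * a * a' - a' * p := by noncomm_ring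
    rw [e, ha₂]; noncomm_ring
  · rw [hdd']
    rw [star_sub, ha₃, hps]
  · rw [hd'd, star_sub, ha₄, hsym]
end

section
/- Let a, b be MP-invertible elements of a ring with involution such that aa†b = b and (a†bb†a)* = a†bb†a, and let d = (1 - bb†)a. Then dd†a = d. -/
/-- With `d = (1 - b b†) a`, one has `d d† a = d`. -/
theorem dd_dagger_a_eq_d {R : Type*} [Ring R] [StarRing R] (a a' b b' d d' : R)
    (ha₁ : a * a' * a = a) (ha₂ : a' * a * a' = a')
    (ha₃ : star (a * a') = a * a') (ha₄ : star (a' * a) = a' * a)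
    (hb₁ : b * b' * b = b) (hb₂ : b' * b * b' = b')
    (hb₃ : star (b * b') = b * b') (hb₄ : star (b' * b) = b' * b)
    (hab : a * a' * b = b)
    (hsym : star (a' * b * b' * a) = a' * b * b' * a)
    (hd : d = (1 - b * b') * a)
    (hd₁ : d * d' * d = d) (hd₂ : d' * d * d' = d')
    (hd₃ : star (d * d') = d * d') (hd₄ : star (d' * d) = d' * d) :
    d * d' * a = d := by
  have hbb : b * b' * (b * b') = b * b' := by
    rw [← mul_assoc, hb₁]
  have h1 : star d * (b * b') = 0 := by
    rw [hd, star_mul, star_sub, star_one, hb₃, mul_assoc, sub_mul, one_mul, hbb,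
      sub_self, mul_zero]
  have h2 : d * d' * (b * b') = 0 := by
    calc d * d' * (b * b') = star (d * d') * (b * b') := by rw [hd₃]
      _ = star d' * (star d * (b * b')) := by rw [star_mul, mul_assoc]
      _ = 0 := by rw [h1, mul_zero]
  have ha : a = d + b * b' * a := by rw [hd]; noncomm_ring
  calc d * d' * a = d * d' * (d + b * b' * a) := by rw [← ha]
    _ = d * d' * d + d * d' * (b * b') * a := by noncomm_ring
    _ = d := by rw [hd₁, h2, zero_mul, add_zero]
end

section
/- Let a, b be MP-invertible elements of a ring with involution such that aa†b = b and (a†bb†a)* = a†bb†a, and let d = (1 - bb†)a. Then d†a = d†d. -/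
/-- With `d = (1 - b b†) a`, one has `d† a = d† d`. -/
theorem d_dagger_a_eq_d_dagger_d {R : Type*} [Ring R] [StarRing R] (a a' b b' d d' : R)
    (ha₁ : a * a' * a = a) (ha₂ : a' * a * a' = a')
    (ha₃ : star (a * a') = a * a') (ha₄ : star (a' * a) = a' * a)
    (hb₁ : b * b' * b = b) (hb₂ : b' * b * b' = b')
    (hb₃ : star (b * b') = b * b') (hb₄ : star (b' * b) = b' * b)
    (hab : a * a' * b = b)
    (hsym : star (a' * b * b' * a) = a' * b * b' * a)
    (hd : d = (1 - b * b') * a)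
    (hd₁ : d * d' * d = d) (hd₂ : d' * d * d' = d')
    (hd₃ : star (d * d') = d * d') (hd₄ : star (d' * d) = d' * d) :
    d' * a = d' * d := by
  have hidem : b * b' * (b * b') = b * b' := by
    rw [← mul_assoc, hb₁]
  have h1 : b * b' * d = 0 := by
    have e : b * b' * ((1 - b * b') * a) = (b * b' - b * b' * (b * b')) * a := by
      noncomm_ring
    rw [hd, e, hidem, sub_self, zero_mul]
  have h2 : star d * (b * b') = 0 := by
    have := congrArg star h1
    rw [star_mul, hb₃, star_zero] at this
    exact this
  have h3 : d' = d' * star d' * star d := by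
    conv_lhs => rw [← hd₂]
    rw [mul_assoc, ← star_star (d * d'), hd₃, star_mul, ← mul_assoc]
  have h4 : d' * (b * b') = 0 := by
    rw [h3, mul_assoc, h2, mul_zero]
  have h5 : d' * (b * b' * a) = 0 := by rw [← mul_assoc, h4, zero_mul]
  have h6 : d' * a - d' * d = d' * (b * b' * a) := by rw [hd]; noncomm_ring
  exact sub_eq_zero.mp (h6.trans h5)
end

section
/- Let R be a unital ring with involution in which 2 is invertible, and let a, b be MP-invertible with aa†b = b, (a†bb†a)* = a†bb†a, d = (1-bb†)a. For any v in R, the element Φ(v) = v - (1/2)a†avb†b + (1/2)a†bv*a*(b†)* - (1/2)a†bv*(b†ad†a)* - (1/2)d†avb†b satisfies aΦ(v)b* - bΦ(v)*a* = 0. -/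
/-- Phi(v) is a solution of the homogeneous equation a x b* - b x* a* = 0.
Here u plays the role of 1/2. -/
theorem phi_solves_homogeneous {R : Type*} [Ring R] [StarRing R] (a a' b b' d d' u : R)
    (hu₁ : (2 : R) * u = 1) (hu₂ : u * (2 : R) = 1)
    (ha₁ : a * a' * a = a) (ha₂ : a' * a * a' = a')
    (ha₃ : star (a * a') = a * a') (ha₄ : star (a' * a) = a' * a)
    (hb₁ : b * b' * b = b) (hb₂ : b' * b * b' = b')
    (hb₃ : star (b * b') = b * b') (hb₄ : star (b' * b) = b' * b)
    (hab : a * a' * b = b)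
    (hsym : star (a' * b * b' * a) = a' * b * b' * a)
    (hd : d = (1 - b * b') * a)
    (hd₁ : d * d' * d = d) (hd₂ : d' * d * d' = d')
    (hd₃ : star (d * d') = d * d') (hd₄ : star (d' * d) = d' * d) :
    ∀ v : R,
      let Φ : R → R := fun v => v - u * (a' * a * v * (b' * b)) + u * (a' * b * star v * star a * star b')
      - u * (a' * b * star v * star (b' * a * d' * a)) - u * (d' * a * v * (b' * b))
      a * Φ v * star b - b * star (Φ v) * star a = 0 := by
  intro v Φ
  show a * Φ v * star b - b * star (Φ v) * star a = 0
  simp only [Φ]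
  -- basic facts about u
  have huc : ∀ x : R, u * x = x * u := by
    intro x
    have h2 : (2:R) * x = x * 2 := by rw [two_mul, mul_two]
    calc u * x = u * x * (2 * u) := by rw [hu₁, mul_one]
      _ = u * (x * 2) * u := by noncomm_ring
      _ = u * (2 * x) * u := by rw [h2]
      _ = (u * 2) * (x * u) := by noncomm_ring
      _ = x * u := by rw [hu₂, one_mul]
  have hustar : star u = u := by
    have h1 : star u * 2 = 1 := by
      have h := congrArg star hu₁
      simpa using h
    calc star u = star u * (2 * u) := by rw [hu₁, mul_one]
      _ = (star u * 2) * u := by rw [mul_assoc]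
      _ = u := by rw [h1, one_mul]
  have h1u : (1:R) - u = u := by
    have h : u + u = 1 := by rw [← two_mul, hu₁]
    rw [← h]; abel
  -- MP consequences
  have k1 : b' * b * star b = star b := by
    have h : star (b * (b' * b)) = star b := by rw [← mul_assoc, hb₁]
    rwa [star_mul, hb₄] at h
  have k5 : star b' * star b = b * b' := by rw [← star_mul, hb₃]
  have hbbsq : (b * b') * (b * b') = b * b' := by
    calc (b * b') * (b * b') = (b * b' * b) * b' := by noncomm_ring
      _ = b * b' := by rw [hb₁]
  have hds : star d = star a * (1 - b * b') := by
    rw [hd, star_mul]; simp [hb₃]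
  -- d d' a = d
  have hdz : star d * ((b * b') * a) = 0 := by
    rw [hds]
    calc star a * (1 - b * b') * ((b * b') * a)
        = star a * ((b * b') - (b * b') * (b * b')) * a := by noncomm_ring
      _ = 0 := by rw [hbbsq]; noncomm_ring
  have hdd'star : d * d' = star d' * star d := by rw [← star_mul, hd₃]
  have hdz2 : d * d' * ((b * b') * a) = 0 := by
    rw [hdd'star, mul_assoc, hdz, mul_zero]
  have hdda : d * d' * a = d := by
    have ha5 : a = d + (b * b') * a := by rw [hd]; noncomm_ring
    calc d * d' * a = d * d' * d + d * d' * ((b * b') * a) := by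
          conv_lhs => rw [ha5]
          noncomm_ring
      _ = d := by rw [hd₁, hdz2, add_zero]
  -- starred versions
  have e1 : b * b' * a = a - d := by rw [hd]; noncomm_ring
  have e1s : star a * (b * b') = star a - star d := by
    calc star a * (b * b') = star a * star (b * b') := by rw [hb₃]
      _ = star (b * b' * a) := by rw [← star_mul]
      _ = star (a - d) := by rw [e1]
      _ = star a - star d := by rw [star_sub]
  have hddas : star a * (star d' * star d) = star d := by
    have h := congrArg star hdda
    rwa [star_mul, star_mul] at h
  -- key claim (starred form)
  have hCs : star a * (b * b') - star a * (star d' * (star a * (b * b')))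
      = star a - star a * (star d' * star a) := by
    calc star a * (b * b') - star a * (star d' * (star a * (b * b')))
        = (star a - star d) - star a * (star d' * (star a - star d)) := by rw [e1s]
      _ = (star a - star a * (star d' * star a)) + (star a * (star d' * star d) - star d) := by
          noncomm_ring
      _ = star a - star a * (star d' * star a) := by rw [hddas]; noncomm_ring
  -- term simplifications
  have t2 : a * (u * (a' * a * v * (b' * b))) * star b = u * (a * (v * star b)) := by
    calc a * (u * (a' * a * v * (b' * b))) * star b
        = a * u * ((a' * a * v * (b' * b)) * star b) := by noncomm_ring
      _ = u * a * ((a' * a * v * (b' * b)) * star b) := by rw [← huc]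
      _ = u * ((a * a' * a) * (v * (b' * b * star b))) := by noncomm_ring
      _ = u * (a * (v * star b)) := by rw [ha₁, k1]
  have t3 : a * (u * (a' * b * star v * star a * star b')) * star b
      = u * (b * (star v * (star a * (b * b')))) := by
    calc a * (u * (a' * b * star v * star a * star b')) * star b
        = a * u * ((a' * b * star v * star a * star b') * star b) := by noncomm_ring
      _ = u * a * ((a' * b * star v * star a * star b') * star b) := by rw [← huc]
      _ = u * ((a * a' * b) * (star v * (star a * (star b' * star b)))) := by noncomm_ring
      _ = u * (b * (star v * (star a * (b * b')))) := by rw [hab, k5]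
  have hsb : star (b' * a * d' * a) * star b
      = star a * (star d' * (star a * (b * b'))) := by
    calc star (b' * a * d' * a) * star b
        = star a * (star d' * (star a * star b')) * star b := by
          simp only [star_mul]
      _ = star a * (star d' * (star a * (star b' * star b))) := by noncomm_ring
      _ = star a * (star d' * (star a * (b * b'))) := by rw [k5]
  have t4 : a * (u * (a' * b * star v * star (b' * a * d' * a))) * star b
      = u * (b * (star v * (star a * (star d' * (star a * (b * b')))))) := by
    calc a * (u * (a' * b * star v * star (b' * a * d' * a))) * star b
        = a * u * ((a' * b * star v * star (b' * a * d' * a)) * star b) := by noncomm_ring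
      _ = u * a * ((a' * b * star v * star (b' * a * d' * a)) * star b) := by rw [← huc]
      _ = u * ((a * a' * b) * (star v * (star (b' * a * d' * a) * star b))) := by noncomm_ring
      _ = u * (b * (star v * (star a * (star d' * (star a * (b * b')))))) := by rw [hab, hsb]
  have t5 : a * (u * (d' * a * v * (b' * b))) * star b
      = u * (a * (d' * (a * (v * star b)))) := by
    calc a * (u * (d' * a * v * (b' * b))) * star b
        = a * u * ((d' * a * v * (b' * b)) * star b) := by noncomm_ring
      _ = u * a * ((d' * a * v * (b' * b)) * star b) := by rw [← huc]
      _ = u * (a * (d' * (a * (v * (b' * b * star b))))) := by noncomm_ring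
      _ = u * (a * (d' * (a * (v * star b)))) := by rw [k1]
  -- the main reduction
  have hS : a * (v - u * (a' * a * v * (b' * b)) + u * (a' * b * star v * star a * star b')
      - u * (a' * b * star v * star (b' * a * d' * a)) - u * (d' * a * v * (b' * b))) * star b
      = u * (a * (v * star b) + b * (star v * star a))
        - u * (a * (d' * (a * (v * star b))) + b * (star v * (star a * (star d' * star a)))) := by
    calc a * (v - u * (a' * a * v * (b' * b)) + u * (a' * b * star v * star a * star b')
          - u * (a' * b * star v * star (b' * a * d' * a)) - u * (d' * a * v * (b' * b))) * star b
        = a * v * star b - a * (u * (a' * a * v * (b' * b))) * star b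
          + a * (u * (a' * b * star v * star a * star b')) * star b
          - a * (u * (a' * b * star v * star (b' * a * d' * a))) * star b
          - a * (u * (d' * a * v * (b' * b))) * star b := by noncomm_ring
      _ = a * v * star b - u * (a * (v * star b))
          + u * (b * (star v * (star a * (b * b'))))
          - u * (b * (star v * (star a * (star d' * (star a * (b * b'))))))
          - u * (a * (d' * (a * (v * star b)))) := by rw [t2, t3, t4, t5]
      _ = (1 - u) * (a * (v * star b))
          + u * (b * (star v * (star a * (b * b') - star a * (star d' * (star a * (b * b'))))))
          - u * (a * (d' * (a * (v * star b)))) := by noncomm_ring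
      _ = u * (a * (v * star b))
          + u * (b * (star v * (star a - star a * (star d' * star a))))
          - u * (a * (d' * (a * (v * star b)))) := by rw [h1u, hCs]
      _ = u * (a * (v * star b) + b * (star v * star a))
          - u * (a * (d' * (a * (v * star b))) + b * (star v * (star a * (star d' * star a)))) := by
          noncomm_ring
  rw [show ∀ E : R, b * star E * star a = star (a * E * star b) from fun E => by
    rw [star_mul, star_mul, star_star, ← mul_assoc]]
  rw [hS]
  -- self-adjointness of the RHS
  have hP : star (a * (v * star b) + b * (star v * star a))
      = a * (v * star b) + b * (star v * star a) := by
    simp only [star_add, star_mul, star_star]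
    noncomm_ring
  have hQ : star (a * (d' * (a * (v * star b))) + b * (star v * (star a * (star d' * star a))))
      = a * (d' * (a * (v * star b))) + b * (star v * (star a * (star d' * star a))) := by
    simp only [star_add, star_mul, star_star]
    noncomm_ring
  rw [star_sub, star_mul, star_mul, hustar, hP, hQ, ← huc, ← huc, sub_self]
end

section
/- Let R be a unital ring with involution in which 2 is invertible, and let a, b be MP-invertible with aa†b = b, (a†bb†a)* = a†bb†a, d = (1-bb†)a. If x satisfies axb* - bx*a* = 0, then x = Φ(x), where Φ(v) = v - (1/2)a†avb†b + (1/2)a†bv*a*(b†)* - (1/2)a†bv*(b†ad†a)* - (1/2)d†avb†b. Hence every solution of axb* = bx*a* is of the form Φ(v) for some v. -/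
/-- Every solution x of a x b* - b x* a* = 0 satisfies x = Phi(x); hence every
solution is of the form Phi(v). Here u plays the role of 1/2. -/
theorem solution_is_phi_of_itself {R : Type*} [Ring R] [StarRing R] (a a' b b' d d' u : R)
    (hu₁ : (2 : R) * u = 1) (hu₂ : u * (2 : R) = 1)
    (ha₁ : a * a' * a = a) (ha₂ : a' * a * a' = a')
    (ha₃ : star (a * a') = a * a') (ha₄ : star (a' * a) = a' * a)
    (hb₁ : b * b' * b = b) (hb₂ : b' * b * b' = b')
    (hb₃ : star (b * b') = b * b') (hb₄ : star (b' * b) = b' * b)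
    (hab : a * a' * b = b)
    (hsym : star (a' * b * b' * a) = a' * b * b' * a)
    (hd : d = (1 - b * b') * a)
    (hd₁ : d * d' * d = d) (hd₂ : d' * d * d' = d')
    (hd₃ : star (d * d') = d * d') (hd₄ : star (d' * d) = d' * d) :
    ∀ x : R, a * x * star b - b * star x * star a = 0 →
      let Φ : R → R := fun v => v - u * (a' * a * v * (b' * b)) + u * (a' * b * star v * star a * star b')
      - u * (a' * b * star v * star (b' * a * d' * a)) - u * (d' * a * v * (b' * b))
      x = Φ x := by
  intro x hx Φ
  have heq : a * x * star b = b * star x * star a := sub_eq_zero.mp hx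
  have hb'b : (b' * b : R) = star b * star b' := by rw [← hb₄, star_mul]
  -- b b' d = 0
  have hbb : b * b' * (b * b') = b * b' := by rw [← mul_assoc, hb₁]
  have hproj : b * b' * (1 - b * b') = 0 := by rw [mul_sub, mul_one, hbb, sub_self]
  have h0 : b * b' * d = 0 := by rw [hd, ← mul_assoc, hproj, zero_mul]
  have h0s : star d * (b * b') = 0 := by
    calc star d * (b * b') = star d * star (b * b') := by rw [hb₃]
      _ = star (b * b' * d) := by rw [← star_mul]
      _ = 0 := by rw [h0, star_zero]
  have hd'bb : d' * (b * b') = 0 := by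
    calc d' * (b * b') = d' * d * d' * (b * b') := by rw [hd₂]
      _ = d' * (star (d * d') * (b * b')) := by rw [← hd₃]; simp [mul_assoc]
      _ = d' * (star d' * (star d * (b * b'))) := by simp [star_mul, mul_assoc]
      _ = 0 := by rw [h0s, mul_zero, mul_zero]
  have hd'b : d' * b = 0 := by
    calc d' * b = d' * (b * b' * b) := by rw [hb₁]
      _ = d' * (b * b') * b := by simp [mul_assoc]
      _ = 0 := by rw [hd'bb, zero_mul]
  have hbd' : star b * star d' = 0 := by rw [← star_mul, hd'b, star_zero]
  have e1 : a' * a * x * (b' * b) = a' * b * star x * star a * star b' := by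
    have h := congrArg (fun t => a' * t * star b') heq
    simp only [mul_assoc] at h ⊢
    rw [hb'b]
    simpa [mul_assoc] using h
  have e3 : a' * b * star x * star (b' * a * d' * a) = 0 := by
    calc a' * b * star x * star (b' * a * d' * a)
        = a' * (b * star x * star a) * (star d' * (star a * star b')) := by
          simp [star_mul, mul_assoc]
      _ = a' * (a * x * star b) * (star d' * (star a * star b')) := by rw [heq]
      _ = a' * (a * (x * ((star b * star d') * (star a * star b')))) := by
          simp [mul_assoc]
      _ = 0 := by rw [hbd', zero_mul, mul_zero, mul_zero, mul_zero]
  have e4 : d' * a * x * (b' * b) = 0 := by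
    calc d' * a * x * (b' * b)
        = d' * (a * x * star b) * star b' := by rw [hb'b]; simp [mul_assoc]
      _ = d' * (b * star x * star a) * star b' := by rw [heq]
      _ = d' * b * (star x * (star a * star b')) := by simp [mul_assoc]
      _ = 0 := by rw [hd'b, zero_mul]
  show x = x - u * (a' * a * x * (b' * b)) + u * (a' * b * star x * star a * star b')
      - u * (a' * b * star x * star (b' * a * d' * a)) - u * (d' * a * x * (b' * b))
  rw [e1, e3, e4]
  simp
end

section
/- Let R be a unital ring with involution in which 2 is invertible, and let a, b be MP-invertible with aa†b = b, (a†bb†a)* = a†bb†a, d = (1-bb†)a. If x₀ = (1/2)a†c(b†)* - (1/2)a†bb†c(b†ad†)* + (1/2)d†c(b†)* satisfies ax₀b* - bx₀*a* = c, then c* = -c and (aa†+dd†)cbb† - ((aa†+dd†)cbb†)* = 2c. -/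
/-- If x0 solves a x b* - b x* a* = c, then c* = -c and
H^(-,*)((a a' + d d') c b b') = 2 c. Here u plays the role of 1/2. -/
theorem necessity_of_conditions {R : Type*} [Ring R] [StarRing R] (a a' b b' d d' u : R)
    (hu₁ : (2 : R) * u = 1) (hu₂ : u * (2 : R) = 1)
    (ha₁ : a * a' * a = a) (ha₂ : a' * a * a' = a')
    (ha₃ : star (a * a') = a * a') (ha₄ : star (a' * a) = a' * a)
    (hb₁ : b * b' * b = b) (hb₂ : b' * b * b' = b')
    (hb₃ : star (b * b') = b * b') (hb₄ : star (b' * b) = b' * b)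
    (hab : a * a' * b = b)
    (hsym : star (a' * b * b' * a) = a' * b * b' * a)
    (hd : d = (1 - b * b') * a)
    (hd₁ : d * d' * d = d) (hd₂ : d' * d * d' = d')
    (hd₃ : star (d * d') = d * d') (hd₄ : star (d' * d) = d' * d) (c : R) :
    let x₀ : R := u * (a' * c * star b') - u * (a' * b * b' * c * star (b' * a * d')) + u * (d' * c * star b')
    a * x₀ * star b - b * star x₀ * star a = c →
      star c = -c ∧
        (a * a' + d * d') * c * (b * b') - star ((a * a' + d * d') * c * (b * b')) = 2 * c := by
  intro x₀ h
  -- facts about u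
  have hx2 : ∀ x : R, x * 2 = 2 * x := fun x => by rw [two_mul, mul_two]
  have hst2 : star (2 : R) = 2 := by
    rw [show (2:R) = 1 + 1 from (one_add_one_eq_two).symm, star_add, star_one]
  have hucomm : ∀ x : R, x * u = u * x := by
    intro x
    have h1 : (2:R) * (x * u) = 2 * (u * x) := by
      rw [← mul_assoc, ← hx2 x, mul_assoc, hu₁, mul_one, ← mul_assoc, hu₁, one_mul]
    calc x * u = u * (2 * (x * u)) := by rw [← mul_assoc, hu₂, one_mul]
    _ = u * (2 * (u * x)) := by rw [h1]
    _ = u * x := by rw [← mul_assoc, hu₂, one_mul]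
  have hucommL : ∀ x y : R, x * (u * y) = u * (x * y) := fun x y => by
    rw [← mul_assoc, hucomm, mul_assoc]
  have hsu : star u = u := by
    have h1 : star u * 2 = 1 := by
      have := congrArg star hu₁
      rwa [star_mul, hst2, star_one] at this
    calc star u = u * (2 * star u) := by rw [← mul_assoc, hu₂, one_mul]
    _ = u * (star u * 2) := by rw [hx2]
    _ = u := by rw [h1, mul_one]
  have hcancel : ∀ z : R, (2:R) * (u * z) = z := fun z => by rw [← mul_assoc, hu₁, one_mul]
  have hcancel' : ∀ z : R, u * ((2:R) * z) = z := fun z => by rw [← mul_assoc, hu₂, one_mul]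
  -- structural reduction lemmas
  have hab_0 : a * (a' * b) = b := by rw [← mul_assoc]; exact hab
  have hab_r : ∀ x : R, a * (a' * (b * x)) = b * x := fun x => by
    rw [← mul_assoc, ← mul_assoc, hab]
  have ha_0 : a * (a' * a) = a := by rw [← mul_assoc]; exact ha₁
  have ha_r : ∀ x : R, a * (a' * (a * x)) = a * x := fun x => by
    rw [← mul_assoc, ← mul_assoc, ha₁]
  have hb_0 : b * (b' * b) = b := by rw [← mul_assoc]; exact hb₁
  have hb_r : ∀ x : R, b * (b' * (b * x)) = b * x := fun x => by
    rw [← mul_assoc, ← mul_assoc, hb₁]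
  have hsa_0 : star a' * star a = a * a' := by rw [← star_mul, ha₃]
  have hsa_r : ∀ x : R, star a' * (star a * x) = a * (a' * x) := fun x => by
    rw [← mul_assoc, hsa_0, mul_assoc]
  have hsb_0 : star b' * star b = b * b' := by rw [← star_mul, hb₃]
  have hsb_r : ∀ x : R, star b' * (star b * x) = b * (b' * x) := fun x => by
    rw [← mul_assoc, hsb_0, mul_assoc]
  have hfe_0 : b * (b' * (a * a')) = b * b' := by
    have hef : a * a' * (b * b') = b * b' := by rw [← mul_assoc, hab]
    have h1 := congrArg star hef
    rw [star_mul, ha₃, hb₃] at h1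
    rw [← mul_assoc]; exact h1
  have hfe_r : ∀ x : R, b * (b' * (a * (a' * x))) = b * (b' * x) := fun x => by
    rw [← mul_assoc a a' x, ← mul_assoc b' _ x, ← mul_assoc b _ x, hfe_0, mul_assoc]
  -- the main reduced equation
  have h2 : (2:R) * c = 2 * (a * x₀ * star b) - 2 * (b * star x₀ * star a) := by
    rw [← mul_sub, h]
  simp only [x₀] at h2
  simp only [star_sub, star_add, star_mul, star_star, hsu, mul_sub, sub_mul, mul_add, add_mul,
    mul_assoc, hucomm, hucommL, hcancel, hcancel'] at h2
  simp only [ha_r, ha_0, hab_r, hab_0, hb_r, hb_0, hsa_r, hsa_0, hsb_r, hsb_0, hfe_r, hfe_0] at h2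
  -- part 1 : star c = -c
  have hc0 : (2:R) * c + star ((2:R) * c) = 0 := by
    rw [h2]
    simp only [star_sub, star_add, star_mul, star_star, hsu, hst2, mul_sub, sub_mul, mul_add,
      add_mul, mul_assoc, hucomm, hucommL, hcancel, hcancel']
    simp only [ha_r, ha_0, hab_r, hab_0, hb_r, hb_0, hsa_r, hsa_0, hsb_r, hsb_0, hfe_r, hfe_0]
    noncomm_ring
  have hcs : c + star c = 0 := by
    have e2 : (2:R) * (c + star c) = 0 := by
      rw [mul_add, show (2:R) * star c = star ((2:R) * c) from by rw [star_mul, hst2, hx2]]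
      exact hc0
    calc c + star c = u * (2 * (c + star c)) := by rw [← mul_assoc, hu₂, one_mul]
    _ = 0 := by rw [e2, mul_zero]
  have hc : star c = -c := eq_neg_of_add_eq_zero_left (by rwa [add_comm] at hcs)
  refine ⟨hc, ?_⟩
  -- part 2
  simp only [hc] at h2
  have k1 : (1 - b * b') * (a * d') = d * d' := by rw [hd, mul_assoc]
  have k2 : star d' * star a * (1 - b * b') = d * d' := by
    have h1 := congrArg star k1
    rw [star_mul, star_mul, star_sub, star_one, hb₃, hd₃] at h1
    exact h1
  have h2' : (2:R) * c = (a * a' + d * d') * c * (b * b') + (b * b') * c * (a * a' + d * d') := by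
    rw [h2]
    nth_rewrite 1 [← k1]
    nth_rewrite 1 [← k2]
    noncomm_ring
  rw [h2']
  simp only [star_mul, star_add, ha₃, hb₃, hd₃, hc]
  noncomm_ring
end

section
/- Let R be a unital ring with involution in which 2 is invertible, and let a, b be MP-invertible with aa†b = b, (a†bb†a)* = a†bb†a, d = (1-bb†)a. If c* = -c and (aa†+dd†)cbb† - ((aa†+dd†)cbb†)* = 2c, then x₀ = (1/2)a†c(b†)* - (1/2)a†bb†c(b†ad†)* + (1/2)d†c(b†)* is a solution of axb* - bx*a* = c. -/
/-- If c* = -c and H^(-,*)((a a' + d d') c b b') = 2 c, then x0 solves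
a x b* - b x* a* = c. Here u plays the role of 1/2. -/
theorem sufficiency_of_conditions {R : Type*} [Ring R] [StarRing R] (a a' b b' d d' u : R)
    (hu₁ : (2 : R) * u = 1) (hu₂ : u * (2 : R) = 1)
    (ha₁ : a * a' * a = a) (ha₂ : a' * a * a' = a')
    (ha₃ : star (a * a') = a * a') (ha₄ : star (a' * a) = a' * a)
    (hb₁ : b * b' * b = b) (hb₂ : b' * b * b' = b')
    (hb₃ : star (b * b') = b * b') (hb₄ : star (b' * b) = b' * b)
    (hab : a * a' * b = b)
    (hsym : star (a' * b * b' * a) = a' * b * b' * a)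
    (hd : d = (1 - b * b') * a)
    (hd₁ : d * d' * d = d) (hd₂ : d' * d * d' = d')
    (hd₃ : star (d * d') = d * d') (hd₄ : star (d' * d) = d' * d) (c : R)
    (hc : star c = -c)
    (hcond : (a * a' + d * d') * c * (b * b') - star ((a * a' + d * d') * c * (b * b')) = 2 * c) :
    let x₀ : R := u * (a' * c * star b') - u * (a' * b * b' * c * star (b' * a * d')) + u * (d' * c * star b')
    a * x₀ * star b - b * star x₀ * star a = c := by
  intro x₀
  -- u is central and self-adjoint
  have hu : ∀ r : R, u * r = r * u := by
    intro r
    calc u * r = u * r * (2 * u) := by rw [hu₁, mul_one]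
    _ = (u * 2) * (r * u) := by noncomm_ring
    _ = r * u := by rw [hu₂, one_mul]
  have hsu : star u = u := by
    have h1 : star u * 2 = 1 := by
      have := congrArg star hu₁
      simpa using this
    calc star u = star u * (2 * u) := by rw [hu₁, mul_one]
    _ = (star u * 2) * u := by rw [mul_assoc]
    _ = u := by rw [h1, one_mul]
  -- basic relations
  have r1 : star b' * star b = b * b' := by rw [← star_mul, hb₃]
  have r2 : star a' * star a = a * a' := by rw [← star_mul, ha₃]
  have r4 : a * a' * (b * b') = b * b' := by rw [← mul_assoc, hab]
  have r5 : b * b' * (a * a') = b * b' := by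
    have h := congrArg star r4
    rwa [star_mul, ha₃, hb₃] at h
  have r3 : star d' * (star a * (1 - b * b')) = (1 - b * b') * (a * d') := by
    have h := hd₃
    rw [hd, star_mul, star_mul, star_sub, star_one, hb₃] at h
    linear_combination (norm := noncomm_ring) h
  have hdd : star ((1 - b * b') * a * d') = (1 - b * b') * a * d' := by
    rw [← hd]; exact hd₃
  have r6 : (a * a' + (1 - b * b') * a * d') * c * (b * b')
      + (b * b') * c * (a * a' + (1 - b * b') * a * d') = 2 * c := by
    rw [hd] at hcond
    have hst : star ((a * a' + (1 - b * b') * a * d') * c * (b * b'))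
        = -((b * b') * c * (a * a' + (1 - b * b') * a * d')) := by
      rw [star_mul, hb₃, star_mul, star_add, ha₃, hdd, hc]
      noncomm_ring
    rw [hst] at hcond
    linear_combination (norm := noncomm_ring) hcond
  -- the core identity, with the factor u removed
  have hG : a * (a' * c * star b' - a' * b * b' * c * (star d' * (star a * star b'))
        + d' * c * star b') * star b
      - b * (-(b' * c * star a') + b' * a * d' * c * (star b' * (star b * star a'))
        - b' * c * star d') * star a = 2 * c := by
    linear_combination (norm := noncomm_ring)
      (a * a' * c) * r1 - (a * a' * (b * b') * c * star d' * star a) * r1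
      - r4 * (c * star d' * star a * (b * b'))
      + (a * d' * c) * r1 + (b * b' * c) * r2
      - (b * b' * a * d' * c) * r1 * (star a' * star a)
      - (b * b' * a * d' * c * (b * b')) * r2
      - (b * b' * a * d' * c) * r5
      + (b * b' * c) * r3 + r6
  have hbad : star (b' * a * d') = star d' * (star a * star b') := by
    rw [star_mul, star_mul]
  have hx : x₀ = u * (a' * c * star b' - a' * b * b' * c * (star d' * (star a * star b'))
      + d' * c * star b') := by
    show u * (a' * c * star b') - u * (a' * b * b' * c * star (b' * a * d'))
        + u * (d' * c * star b') = _
    rw [hbad]; noncomm_ring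
  have hsw : star (a' * c * star b' - a' * b * b' * c * (star d' * (star a * star b'))
        + d' * c * star b')
      = -(b' * c * star a') + b' * a * d' * c * (star b' * (star b * star a'))
        - b' * c * star d' := by
    simp only [star_add, star_sub, star_mul, star_star, hc]
    noncomm_ring
  have hmid : ∀ p q r : R, p * (u * q) * r = u * (p * q * r) := by
    intro p q r
    rw [← mul_assoc p u q, ← hu p, mul_assoc u p q, mul_assoc, mul_assoc]
  have hmid2 : ∀ p q r : R, p * (q * u) * r = u * (p * q * r) := by
    intro p q r
    rw [← hu q]; exact hmid p q r
  rw [hx, star_mul, hsu, hsw]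
  rw [hmid, hmid2, ← mul_sub, hG, ← mul_assoc, hu₂, one_mul]
end

section
/- Let R be a unital ring with involution in which 2 is invertible, and let a, b be MP-invertible with aa†b = b, (a†bb†a)* = a†bb†a, d = (1-bb†)a. The equation axb* - bx*a* = c has a solution if and only if c* = -c and (aa†+dd†)cbb† - ((aa†+dd†)cbb†)* = 2c; in that case the general solution is x = x₀ + Φ(v) for arbitrary v, where x₀ = (1/2)a†c(b†)* - (1/2)a†bb†c(b†ad†)* + (1/2)d†c(b†)* and Φ(v) = v - (1/2)a†avb†b + (1/2)a†bv*a*(b†)* - (1/2)a†bv*(b†ad†a)* - (1/2)d†avb†b. -/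
/-- a x b* - b x* a* = c is solvable iff c* = -c and H^(-,*)((a a' + d d') c b b') = 2 c,
in which case the general solution is x = x0 + Phi(v). Here u plays the role of 1/2. -/
theorem general_solution_skew {R : Type*} [Ring R] [StarRing R] (a a' b b' d d' u : R)
    (hu₁ : (2 : R) * u = 1) (hu₂ : u * (2 : R) = 1)
    (ha₁ : a * a' * a = a) (ha₂ : a' * a * a' = a')
    (ha₃ : star (a * a') = a * a') (ha₄ : star (a' * a) = a' * a)
    (hb₁ : b * b' * b = b) (hb₂ : b' * b * b' = b')
    (hb₃ : star (b * b') = b * b') (hb₄ : star (b' * b) = b' * b)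
    (hab : a * a' * b = b)
    (hsym : star (a' * b * b' * a) = a' * b * b' * a)
    (hd : d = (1 - b * b') * a)
    (hd₁ : d * d' * d = d) (hd₂ : d' * d * d' = d')
    (hd₃ : star (d * d') = d * d') (hd₄ : star (d' * d) = d' * d) (c : R) :
    let x₀ : R := u * (a' * c * star b') - u * (a' * b * b' * c * star (b' * a * d')) + u * (d' * c * star b')
    let Φ : R → R := fun v => v - u * (a' * a * v * (b' * b)) + u * (a' * b * star v * star a * star b')
      - u * (a' * b * star v * star (b' * a * d' * a)) - u * (d' * a * v * (b' * b))
    ((∃ x : R, a * x * star b - b * star x * star a = c) ↔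
      (star c = -c ∧
        (a * a' + d * d') * c * (b * b') - star ((a * a' + d * d') * c * (b * b')) = 2 * c)) ∧
    ((star c = -c ∧
        (a * a' + d * d') * c * (b * b') - star ((a * a' + d * d') * c * (b * b')) = 2 * c) →
      ∀ x : R, (a * x * star b - b * star x * star a = c ↔ ∃ v : R, x = x₀ + Φ v)) := by
  intro x₀ Φ
  have hx0 : x₀ = u * (a' * c * star b') - u * (a' * b * b' * c * star (b' * a * d')) + u * (d' * c * star b') := rfl
  have hPhi : ∀ v : R, Φ v = v - u * (a' * a * v * (b' * b)) + u * (a' * b * star v * star a * star b')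
      - u * (a' * b * star v * star (b' * a * d' * a)) - u * (d' * a * v * (b' * b)) := fun v => rfl
  -- scalar facts about u
  have h2r : ∀ r : R, (2 : R) * r = r * 2 := fun r => by rw [two_mul, mul_two]
  have hucomm : ∀ r : R, r * u = u * r := fun r => by
    calc r * u = (u * 2) * (r * u) := by rw [hu₂, one_mul]
    _ = u * ((2 * r) * u) := by noncomm_ring
    _ = u * ((r * 2) * u) := by rw [h2r]
    _ = u * (r * (2 * u)) := by noncomm_ring
    _ = u * r := by rw [hu₁, mul_one]
  have humid : ∀ r t : R, r * (u * t) = u * (r * t) := fun r t => by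
    rw [← mul_assoc, hucomm r, mul_assoc]
  have t2u : ∀ t : R, (2 : R) * (u * t) = t := fun t => by rw [← mul_assoc, hu₁, one_mul]
  have t2u' : ∀ t : R, u * ((2 : R) * t) = t := fun t => by rw [← mul_assoc, hu₂, one_mul]
  have s2 : star (2 : R) = 2 := by
    rw [show (2:R) = 1 + 1 by norm_num, star_add, star_one]
  have hustar : star u = u := by
    have h1 : star u * 2 = 1 := by
      calc star u * 2 = star u * star (2:R) := by rw [s2]
      _ = star ((2:R) * u) := (star_mul _ _).symm
      _ = 1 := by rw [hu₁, star_one]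
    calc star u = star u * (2 * u) := by rw [hu₁, mul_one]
    _ = (star u * 2) * u := by rw [mul_assoc]
    _ = u := by rw [h1, one_mul]
  have cancel2 : ∀ X Y : R, (2 : R) * X = 2 * Y → X = Y := fun X Y h => by
    calc X = u * (2 * X) := (t2u' X).symm
    _ = u * (2 * Y) := by rw [h]
    _ = Y := t2u' Y
  -- basic star rules
  have r8 : star a' * star a = a * a' := by rw [← star_mul, ha₃]
  have r9 : star a * star a' = a' * a := by rw [← star_mul, ha₄]
  have r10 : star b' * star b = b * b' := by rw [← star_mul, hb₃]
  have r11 : star b * star b' = b' * b := by rw [← star_mul, hb₄]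
  have r12 : star d' * star d = d * d' := by rw [← star_mul, hd₃]
  have r13 : star d * star d' = d' * d := by rw [← star_mul, hd₄]
  have r8p : ∀ t : R, star a' * (star a * t) = a * (a' * t) := fun t => by
    rw [← mul_assoc, r8, mul_assoc]
  have r9p : ∀ t : R, star a * (star a' * t) = a' * (a * t) := fun t => by
    rw [← mul_assoc, r9, mul_assoc]
  have r10p : ∀ t : R, star b' * (star b * t) = b * (b' * t) := fun t => by
    rw [← mul_assoc, r10, mul_assoc]
  have r11p : ∀ t : R, star b * (star b' * t) = b' * (b * t) := fun t => by
    rw [← mul_assoc, r11, mul_assoc]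
  have r12p : ∀ t : R, star d' * (star d * t) = d * (d' * t) := fun t => by
    rw [← mul_assoc, r12, mul_assoc]
  have r13p : ∀ t : R, star d * (star d' * t) = d' * (d * t) := fun t => by
    rw [← mul_assoc, r13, mul_assoc]
  -- projection rules (param forms)
  have r1p : ∀ t : R, a * (a' * (a * t)) = a * t := fun t => by
    rw [← mul_assoc, ← mul_assoc, ha₁]
  have r2p : ∀ t : R, a' * (a * (a' * t)) = a' * t := fun t => by
    rw [← mul_assoc, ← mul_assoc, ha₂]
  have r3p : ∀ t : R, b * (b' * (b * t)) = b * t := fun t => by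
    rw [← mul_assoc, ← mul_assoc, hb₁]
  have r4p : ∀ t : R, b' * (b * (b' * t)) = b' * t := fun t => by
    rw [← mul_assoc, ← mul_assoc, hb₂]
  have r5p : ∀ t : R, d * (d' * (d * t)) = d * t := fun t => by
    rw [← mul_assoc, ← mul_assoc, hd₁]
  have r6p : ∀ t : R, d' * (d * (d' * t)) = d' * t := fun t => by
    rw [← mul_assoc, ← mul_assoc, hd₂]
  have ra₁ : a * (a' * a) = a := by rw [← mul_assoc]; exact ha₁
  have ra₂ : a' * (a * a') = a' := by rw [← mul_assoc]; exact ha₂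
  have rb₁ : b * (b' * b) = b := by rw [← mul_assoc]; exact hb₁
  have hb₂' : b' * (b * b') = b' := by rw [← mul_assoc]; exact hb₂
  have rd₁ : d * (d' * d) = d := by rw [← mul_assoc]; exact hd₁
  have rd₂ : d' * (d * d') = d' := by rw [← mul_assoc]; exact hd₂
  have r7 : a * (a' * b) = b := by rw [← mul_assoc]; exact hab
  have r7p : ∀ t : R, a * (a' * (b * t)) = b * t := fun t => by
    rw [← mul_assoc, ← mul_assoc, hab]
  -- mixed star rules
  have r14 : star b * (a * a') = star b := by
    have h := congrArg star hab
    rwa [star_mul, ha₃] at h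
  have r14p : ∀ t : R, star b * (a * (a' * t)) = star b * t := fun t => by
    have h1 : star b * (a * (a' * t)) = (star b * (a * a')) * t := by noncomm_ring
    rw [h1, r14]
  have r30 : star a * (a * a') = star a := by
    have h := congrArg star ha₁
    rwa [star_mul, ha₃] at h
  have r30p : ∀ t : R, star a * (a * (a' * t)) = star a * t := fun t => by
    have h1 : star a * (a * (a' * t)) = (star a * (a * a')) * t := by noncomm_ring
    rw [h1, r30]
  have h13 : star b * (b * b') = star b := by
    have h := congrArg star hb₁
    rwa [star_mul, hb₃] at h
  have h13p : ∀ t : R, star b * (b * (b' * t)) = star b * t := fun t => by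
    have h1 : star b * (b * (b' * t)) = (star b * (b * b')) * t := by noncomm_ring
    rw [h1, h13]
  have h10 : a' * (a * star a) = star a := by
    have h := congrArg star ra₁
    rw [star_mul, ha₄] at h
    rwa [mul_assoc] at h
  have h10p : ∀ t : R, a' * (a * (star a * t)) = star a * t := fun t => by
    have h1 : a' * (a * (star a * t)) = (a' * (a * star a)) * t := by noncomm_ring
    rw [h1, h10]
  have h11 : b' * (b * star b) = star b := by
    have h := congrArg star rb₁
    rw [star_mul, hb₄] at h
    rwa [mul_assoc] at h
  have h11p : ∀ t : R, b' * (b * (star b * t)) = star b * t := fun t => by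
    have h1 : b' * (b * (star b * t)) = (b' * (b * star b)) * t := by noncomm_ring
    rw [h1, h11]
  have h12 : d' * (d * star d) = star d := by
    have h := congrArg star rd₁
    rw [star_mul, hd₄] at h
    rwa [mul_assoc] at h
  have h12p : ∀ t : R, d' * (d * (star d * t)) = star d * t := fun t => by
    have h1 : d' * (d * (star d * t)) = (d' * (d * star d)) * t := by noncomm_ring
    rw [h1, h12]
  -- rules involving d
  have hstdb : star d * b = 0 := by
    rw [hd, star_mul, star_sub, star_one, hb₃]
    have h1 : star a * (1 - b * b') * b = star a * b - star a * (b * b' * b) := by noncomm_ring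
    rw [h1, hb₁, sub_self]
  have hstdbp : ∀ t : R, star d * (b * t) = 0 := fun t => by
    rw [← mul_assoc, hstdb, zero_mul]
  have hb'd : b' * d = 0 := by
    rw [hd]
    have h1 : b' * ((1 - b * b') * a) = b' * a - b' * b * b' * a := by noncomm_ring
    rw [h1, hb₂, sub_self]
  have hb'dp : ∀ t : R, b' * (d * t) = 0 := fun t => by
    rw [← mul_assoc, hb'd, zero_mul]
  have hdd'b : d * d' * b = 0 := by
    have h1 : d * d' * b = star d' * (star d * b) := by rw [← hd₃, star_mul, mul_assoc]
    rw [h1, hstdb, mul_zero]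
  have hd'b : d' * b = 0 := by
    calc d' * b = (d' * d * d') * b := by rw [hd₂]
    _ = d' * (d * d' * b) := by noncomm_ring
    _ = 0 := by rw [hdd'b, mul_zero]
  have hd'bp : ∀ t : R, d' * (b * t) = 0 := fun t => by
    rw [← mul_assoc, hd'b, zero_mul]
  have hstbd' : star b * star d' = 0 := by rw [← star_mul, hd'b, star_zero]
  have hstbd'p : ∀ t : R, star b * (star d' * t) = 0 := fun t => by
    rw [← mul_assoc, hstbd', zero_mul]
  have haexp : a = d + b * b' * a := by rw [hd]; noncomm_ring
  have hd'a : d' * a = d' * d := by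
    have key : d' * (d + b * b' * a) = d' * d + (d' * b) * (b' * a) := by noncomm_ring
    rw [← haexp] at key
    rw [hd'b, zero_mul, add_zero] at key
    exact key
  have hd'ap : ∀ t : R, d' * (a * t) = d' * (d * t) := fun t => by
    rw [← mul_assoc, hd'a, mul_assoc]
  have hdd'a : d * d' * a = d := by
    have key : d * d' * (d + b * b' * a) = d * d' * d + (d * d' * b) * (b' * a) := by noncomm_ring
    rw [← haexp] at key
    rw [hd₁, hdd'b, zero_mul, add_zero] at key
    exact key
  have r23 : star a * star d' = d' * d := by
    calc star a * star d' = star (d' * a) := (star_mul d' a).symm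
    _ = star (d' * d) := by rw [hd'a]
    _ = d' * d := hd₄
  have r23p : ∀ t : R, star a * (star d' * t) = d' * (d * t) := fun t => by
    rw [← mul_assoc, r23, mul_assoc]
  have hds : star d = star a - star a * (b * b') := by
    rw [hd, star_mul, star_sub, star_one, hb₃]; noncomm_ring
  have r24 : star a * (b * b') = star a - star d := by rw [hds]; noncomm_ring
  have r24p : ∀ t : R, star a * (b * (b' * t)) = star a * t - star d * t := fun t => by
    have h1 : star a * (b * (b' * t)) = (star a * (b * b')) * t := by noncomm_ring
    rw [h1, r24, sub_mul]
  have r25 : b * (b' * a) = a - d := by rw [hd]; noncomm_ring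
  have r25p : ∀ t : R, b * (b' * (a * t)) = a * t - d * t := fun t => by
    have h1 : b * (b' * (a * t)) = (b * (b' * a)) * t := by noncomm_ring
    rw [h1, r25, sub_mul]
  have r31 : star a * (d * d') = star d := by
    have h := congrArg star hdd'a
    rwa [star_mul, hd₃] at h
  have r31p : ∀ t : R, star a * (d * (d' * t)) = star d * t := fun t => by
    have h1 : star a * (d * (d' * t)) = (star a * (d * d')) * t := by noncomm_ring
    rw [h1, r31]
  have r32 : star b * (d * d') = 0 := by
    have h := congrArg star hdd'b
    rwa [star_mul, hd₃, star_zero] at h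
  have r32p : ∀ t : R, star b * (d * (d' * t)) = 0 := fun t => by
    have h1 : star b * (d * (d' * t)) = (star b * (d * d')) * t := by noncomm_ring
    rw [h1, r32, zero_mul]
  have hqp : (b * b') * (a * a') = b * b' := by
    rw [← r10, mul_assoc, r14]
  have H8 : b' * (a * a') = b' := by
    conv_lhs => rw [← hb₂']
    rw [mul_assoc, hqp, hb₂']
  have H8p : ∀ t : R, b' * (a * (a' * t)) = b' * t := fun t => by
    have h1 : b' * (a * (a' * t)) = (b' * (a * a')) * t := by noncomm_ring
    rw [h1, H8]
  -- the three key computations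
  have key₀ : star c = -c →
      ((a * a' + d * d') * c * (b * b') - star ((a * a' + d * d') * c * (b * b')) = 2 * c) →
      a * x₀ * star b - b * star x₀ * star a = c := by
    intro hc h2
    apply cancel2
    rw [hx0, ← h2]
    simp only [hc, mul_assoc, mul_add, add_mul, mul_sub, sub_mul, mul_one, one_mul, mul_zero,
      zero_mul, neg_mul, mul_neg, neg_neg, star_mul, star_add, star_sub, star_neg, star_one,
      star_zero, star_star, hustar, hucomm, humid, t2u, t2u', hu₁, hu₂, ha₃, ha₄, hb₃, hb₄, hd₃,
      hd₄, r8, r8p, r9, r9p, r10, r10p, r11, r11p, r12, r12p, r13, r13p, r14, r14p, r30, r30p,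
      h13, h13p, h10, h10p, h11, h11p, h12, h12p, hstdb, hstdbp, hb'd, hb'dp, hd'b, hd'bp,
      hstbd', hstbd'p, hd'a, hd'ap, r23, r23p, r24, r24p, r25, r25p, r31, r31p, r32, r32p,
      H8, H8p, r1p, r2p, r3p, r4p, r5p, r6p, r7, r7p]
    noncomm_ring
  have keyΦ : ∀ v : R, a * (Φ v) * star b - b * star (Φ v) * star a = 0 := by
    intro v
    apply cancel2
    rw [hPhi]
    simp only [mul_assoc, mul_add, add_mul, mul_sub, sub_mul, mul_one, one_mul, mul_zero,
      zero_mul, neg_mul, mul_neg, neg_neg, star_mul, star_add, star_sub, star_neg, star_one,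
      star_zero, star_star, hustar, hucomm, humid, t2u, t2u', hu₁, hu₂, ha₃, ha₄, hb₃, hb₄, hd₃,
      hd₄, r8, r8p, r9, r9p, r10, r10p, r11, r11p, r12, r12p, r13, r13p, r14, r14p, r30, r30p,
      h13, h13p, h10, h10p, h11, h11p, h12, h12p, hstdb, hstdbp, hb'd, hb'dp, hd'b, hd'bp,
      hstbd', hstbd'p, hd'a, hd'ap, r23, r23p, r24, r24p, r25, r25p, r31, r31p, r32, r32p,
      H8, H8p, r1p, r2p, r3p, r4p, r5p, r6p, r7, r7p]
    noncomm_ring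
  refine ⟨⟨?_, ?_⟩, ?_⟩
  · rintro ⟨x, hx⟩
    constructor
    · rw [← hx]
      simp only [star_sub, star_mul, star_star]
      noncomm_ring
    · rw [← hx]
      simp only [mul_assoc, mul_add, add_mul, mul_sub, sub_mul, mul_one, one_mul, mul_zero,
        zero_mul, neg_mul, mul_neg, neg_neg, star_mul, star_add, star_sub, star_neg, star_one,
        star_zero, star_star, hustar, hucomm, humid, t2u, t2u', hu₁, hu₂, ha₃, ha₄, hb₃, hb₄, hd₃,
        hd₄, r8, r8p, r9, r9p, r10, r10p, r11, r11p, r12, r12p, r13, r13p, r14, r14p, r30, r30p,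
        h13, h13p, h10, h10p, h11, h11p, h12, h12p, hstdb, hstdbp, hb'd, hb'dp, hd'b, hd'bp,
        hstbd', hstbd'p, hd'a, hd'ap, r23, r23p, r24, r24p, r25, r25p, r31, r31p, r32, r32p,
        H8, H8p, r1p, r2p, r3p, r4p, r5p, r6p, r7, r7p]
      noncomm_ring
  · rintro ⟨hc, h2⟩
    exact ⟨x₀, key₀ hc h2⟩
  · rintro ⟨hc, h2⟩ x
    constructor
    · intro hx
      refine ⟨x, ?_⟩
      apply cancel2
      rw [hx0, hPhi, ← hx]
      simp only [mul_assoc, mul_add, add_mul, mul_sub, sub_mul, mul_one, one_mul, mul_zero,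
        zero_mul, neg_mul, mul_neg, neg_neg, star_mul, star_add, star_sub, star_neg, star_one,
        star_zero, star_star, hustar, hucomm, humid, t2u, t2u', hu₁, hu₂, ha₃, ha₄, hb₃, hb₄, hd₃,
        hd₄, r8, r8p, r9, r9p, r10, r10p, r11, r11p, r12, r12p, r13, r13p, r14, r14p, r30, r30p,
        h13, h13p, h10, h10p, h11, h11p, h12, h12p, hstdb, hstdbp, hb'd, hb'dp, hd'b, hd'bp,
        hstbd', hstbd'p, hd'a, hd'ap, r23, r23p, r24, r24p, r25, r25p, r31, r31p, r32, r32p,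
        H8, H8p, r1p, r2p, r3p, r4p, r5p, r6p, r7, r7p]
      noncomm_ring
    · rintro ⟨v, rfl⟩
      have e1 := key₀ hc h2
      have e2 := keyΦ v
      calc a * (x₀ + Φ v) * star b - b * star (x₀ + Φ v) * star a
          = (a * x₀ * star b - b * star x₀ * star a)
            + (a * (Φ v) * star b - b * star (Φ v) * star a) := by
            rw [star_add]; noncomm_ring
        _ = c + 0 := by rw [e1, e2]
        _ = c := add_zero c
end

section
/- Let R be a unital ring with involution in which 2 is invertible, and let a, b be MP-invertible with aa†b = b, (a†bb†a)* = a†bb†a, d = (1-bb†)a. The equation axb* + bx*a* = c has a solution if and only if c* = c and (aa†+dd†)cbb† + ((aa†+dd†)cbb†)* = 2c; in that case the general solution is x = x₀' + Φ'(v) for arbitrary v, where x₀' = (1/2)a†c(b†)* - (1/2)a†bb†c(b†ad†)* + (1/2)d†c(b†)* and Φ'(v) = v - (1/2)a†avb†b - (1/2)a†bv*a*(b†)* + (1/2)a†bv*(b†ad†a)* - (1/2)d†avb†b. -/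
private theorem mp_unique0 {R : Type*} [Ring R] [StarRing R] {d x y : R}
    (hx2 : x * d * x = x) (hx3 : star (d*x) = d*x) (hx4 : star (x*d) = x*d)
    (hy1 : d * y * d = d) (hy3 : star (d*y) = d*y) (hy4 : star (y*d) = y*d)
    (hx1 : d * x * d = d) (hy2 : y * d * y = y) : x = y := by
  have hsd : star d * star y * star d = star d := by
    have h := congrArg star hy1
    rw [star_mul, star_mul] at h
    rw [mul_assoc]; exact h
  have hsd' : star d * star x * star d = star d := by
    have h := congrArg star hx1
    rw [star_mul, star_mul] at h
    rw [mul_assoc]; exact h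
  have h1 : x = x * d * y := by
    calc x = x * d * x := hx2.symm
    _ = x * (d * x) := by rw [mul_assoc]
    _ = x * star (d*x) := by rw [hx3]
    _ = x * (star x * star d) := by rw [star_mul]
    _ = x * (star x * (star d * star y * star d)) := by rw [hsd]
    _ = (x * (star x * star d)) * (star y * star d) := by noncomm_ring
    _ = (x * star (d * x)) * star (d * y) := by rw [star_mul, star_mul]
    _ = (x * (d * x)) * (d * y) := by rw [hx3, hy3]
    _ = (x * d * x) * (d * y) := by noncomm_ring
    _ = x * (d * y) := by rw [hx2]
    _ = x * d * y := by noncomm_ring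
  have h2 : y = x * d * y := by
    calc y = y * d * y := hy2.symm
    _ = (y * d) * y := rfl
    _ = star (y * d) * y := by rw [hy4]
    _ = (star d * star y) * y := by rw [star_mul]
    _ = ((star d * star x * star d) * star y) * y := by rw [hsd']
    _ = (star d * star x) * (star d * star y) * y := by noncomm_ring
    _ = star (x * d) * star (y * d) * y := by rw [star_mul, star_mul]
    _ = (x * d) * (y * d) * y := by rw [hx4, hy4]
    _ = x * d * (y * d * y) := by noncomm_ring
    _ = x * d * y := by rw [hy2]
  rw [h1, ← h2]

/-- a x b* + b x* a* = c is solvable iff c* = c and H^(+,*)((a a' + d d') c b b') = 2 c,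
in which case the general solution is x = x0' + Phi'(v). Here u plays the role of 1/2. -/
theorem general_solution_sym {R : Type*} [Ring R] [StarRing R] (a a' b b' d d' u : R)
    (hu₁ : (2 : R) * u = 1) (hu₂ : u * (2 : R) = 1)
    (ha₁ : a * a' * a = a) (ha₂ : a' * a * a' = a')
    (ha₃ : star (a * a') = a * a') (ha₄ : star (a' * a) = a' * a)
    (hb₁ : b * b' * b = b) (hb₂ : b' * b * b' = b')
    (hb₃ : star (b * b') = b * b') (hb₄ : star (b' * b) = b' * b)
    (hab : a * a' * b = b)
    (hsym : star (a' * b * b' * a) = a' * b * b' * a)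
    (hd : d = (1 - b * b') * a)
    (hd₁ : d * d' * d = d) (hd₂ : d' * d * d' = d')
    (hd₃ : star (d * d') = d * d') (hd₄ : star (d' * d) = d' * d) (c : R) :
    let x₀' : R := u * (a' * c * star b') - u * (a' * b * b' * c * star (b' * a * d')) + u * (d' * c * star b')
    let Φ' : R → R := fun v => v - u * (a' * a * v * (b' * b)) - u * (a' * b * star v * star a * star b')
      + u * (a' * b * star v * star (b' * a * d' * a)) - u * (d' * a * v * (b' * b))
    ((∃ x : R, a * x * star b + b * star x * star a = c) ↔
      (star c = c ∧
        (a * a' + d * d') * c * (b * b') + star ((a * a' + d * d') * c * (b * b')) = 2 * c)) ∧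
    ((star c = c ∧
        (a * a' + d * d') * c * (b * b') + star ((a * a' + d * d') * c * (b * b')) = 2 * c) →
      ∀ x : R, (a * x * star b + b * star x * star a = c ↔ ∃ v : R, x = x₀' + Φ' v)) := by
  -- u is central and self-adjoint
  have h2c : ∀ r : R, 2 * r = r * 2 := fun r => by rw [two_mul, mul_two]
  have hu_comm : ∀ r : R, u * r = r * u := by
    intro r
    calc u * r = u * r * (2 * u) := by rw [hu₁, mul_one]
    _ = u * (r * 2) * u := by noncomm_ring
    _ = u * (2 * r) * u := by rw [← h2c]
    _ = (u * 2) * (r * u) := by noncomm_ring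
    _ = r * u := by rw [hu₂, one_mul]
  have hpull : ∀ p q : R, p * (u * q) = u * (p * q) := fun p q => by
    rw [← mul_assoc, ← hu_comm, mul_assoc]
  have hsu : star u = u := by
    have h2s : star (2 : R) = 2 := by
      have : ((2:ℕ) : R) = (2 : R) := by norm_num
      rw [← this, star_natCast]
    have h1 : (2:R) * star u = 1 := by rw [← h2s, ← star_mul, hu₂, star_one]
    calc star u = star u * ((2:R) * u) := by rw [hu₁, mul_one]
    _ = (star u * 2) * u := by rw [mul_assoc]
    _ = u := by rw [← h2s, ← star_mul, hu₁, star_one, one_mul]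
  have r1 : ∀ x : R, a * (a' * (a * x)) = a * x := fun x => by
    rw [← mul_assoc, ← mul_assoc, ha₁]
  have r1b : a * (a' * a) = a := by rw [← mul_assoc, ha₁]
  have r2 : ∀ x : R, a' * (a * (a' * x)) = a' * x := fun x => by
    rw [← mul_assoc, ← mul_assoc, ha₂]
  have r2b : a' * (a * a') = a' := by rw [← mul_assoc, ha₂]
  have r3 : ∀ x : R, b * (b' * (b * x)) = b * x := fun x => by
    rw [← mul_assoc, ← mul_assoc, hb₁]
  have r3b : b * (b' * b) = b := by rw [← mul_assoc, hb₁]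
  have r4 : ∀ x : R, b' * (b * (b' * x)) = b' * x := fun x => by
    rw [← mul_assoc, ← mul_assoc, hb₂]
  have r4b : b' * (b * b') = b' := by rw [← mul_assoc, hb₂]
  have r5 : ∀ x : R, a * (a' * (b * x)) = b * x := fun x => by
    rw [← mul_assoc, ← mul_assoc, hab]
  have r5b : a * (a' * b) = b := by rw [← mul_assoc, hab]
  have s1b : star a' * star a = a * a' := by rw [← star_mul, ha₃]
  have s1 : ∀ x : R, star a' * (star a * x) = a * (a' * x) := fun x => by
    rw [← mul_assoc, s1b, mul_assoc]
  have s2b : star a * star a' = a' * a := by rw [← star_mul, ha₄]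
  have s2 : ∀ x : R, star a * (star a' * x) = a' * (a * x) := fun x => by
    rw [← mul_assoc, s2b, mul_assoc]
  have s3b : star b' * star b = b * b' := by rw [← star_mul, hb₃]
  have s3 : ∀ x : R, star b' * (star b * x) = b * (b' * x) := fun x => by
    rw [← mul_assoc, s3b, mul_assoc]
  have s4b : star b * star b' = b' * b := by rw [← star_mul, hb₄]
  have s4 : ∀ x : R, star b * (star b' * x) = b' * (b * x) := fun x => by
    rw [← mul_assoc, s4b, mul_assoc]
  -- b b' a a' = b b'
  have hQP : b * (b' * (a * a')) = b * b' := by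
    have h := congrArg star (show a * a' * (b * b') = b * b' by rw [← mul_assoc, hab])
    rw [star_mul, ha₃, hb₃] at h
    rw [← mul_assoc] at h ⊢; rw [← mul_assoc]; exact h
  have r6 : ∀ x : R, b * (b' * (a * (a' * x))) = b * (b' * x) := fun x => by
    have := congrArg (· * x) hQP
    simp only [mul_assoc] at this ⊢
    exact this
  have r6b : b * (b' * (a * a')) = b * b' := hQP
  have r7b : star b * (a * a') = star b := by
    rw [← ha₃, ← star_mul, hab]
  have r7 : ∀ x : R, star b * (a * (a' * x)) = star b * x := fun x => by
    have := congrArg (· * x) r7b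
    simp only [mul_assoc] at this ⊢
    exact this
  have r9b : a' * (a * star a) = star a := by
    rw [← mul_assoc, ← ha₄, ← star_mul, ← mul_assoc, ha₁]
  have r9 : ∀ x : R, a' * (a * (star a * x)) = star a * x := fun x => by
    have := congrArg (· * x) r9b
    simp only [mul_assoc] at this ⊢
    exact this
  have r10b : b' * (b * star b) = star b := by
    rw [← mul_assoc, ← hb₄, ← star_mul, ← mul_assoc, hb₁]
  have r10 : ∀ x : R, b' * (b * (star b * x)) = star b * x := fun x => by
    have := congrArg (· * x) r10b
    simp only [mul_assoc] at this ⊢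
    exact this
  have s5b : star a * (star b' * (star b * star a')) = a' * (b * (b' * a)) := by
    have h := hsym
    rw [star_mul, star_mul, star_mul] at h
    simp only [mul_assoc] at h ⊢
    exact h
  have s5 : ∀ x : R, star a * (star b' * (star b * (star a' * x))) = a' * (b * (b' * (a * x))) :=
    fun x => by
    have := congrArg (· * x) s5b
    simp only [mul_assoc] at this ⊢
    exact this

  have s5c : star a * (b * (b' * star a')) = a' * (b * (b' * a)) := by
    rw [← s3]; exact s5b
  have s5d : ∀ x : R, star a * (b * (b' * (star a' * x))) = a' * (b * (b' * (a * x))) :=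
    fun x => by
    have := congrArg (· * x) s5c
    simp only [mul_assoc] at this ⊢
    exact this
  have r11b : star b * (b * b') = star b := by
    rw [← hb₃, ← star_mul, hb₁]
  have r11 : ∀ x : R, star b * (b * (b' * x)) = star b * x := fun x => by
    have := congrArg (· * x) r11b
    simp only [mul_assoc] at this ⊢
    exact this
  have r12b : star a * (a * a') = star a := by
    rw [← ha₃, ← star_mul, ha₁]
  have r12 : ∀ x : R, star a * (a * (a' * x)) = star a * x := fun x => by
    have := congrArg (· * x) r12b
    simp only [mul_assoc] at this ⊢
    exact this
  have s6b : a' * (b * (b' * (a * star a))) = star a * (b * b') := by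
    have h1 : a' * (b * (b' * (a * star a))) = a' * b * b' * a * star a := by
      simp only [mul_assoc]
    rw [h1, mul_assoc (a' * b * b'), ← mul_assoc, ← hsym, ← star_mul]
    have h2 : a * (a' * b * b' * a) = b * (b' * a) := by
      simp only [mul_assoc]; rw [r5]
    rw [h2, star_mul, star_mul, mul_assoc, s3b]
  have s6 : ∀ x : R, a' * (b * (b' * (a * (star a * x)))) = star a * (b * (b' * x)) := fun x => by
    have := congrArg (· * x) s6b
    simp only [mul_assoc] at this ⊢
    exact this
  have s7b : b * (b' * star b') = star b' := by
    have h := congrArg star hb₂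
    rw [star_mul, star_mul, ← mul_assoc, s3b, mul_assoc] at h
    exact h
  have s7 : ∀ x : R, b * (b' * (star b' * x)) = star b' * x := fun x => by
    have := congrArg (· * x) s7b
    simp only [mul_assoc] at this ⊢
    exact this
  have s8b : a * (a' * star a') = star a' := by
    have h := congrArg star ha₂
    rw [star_mul, star_mul, ← mul_assoc, s1b, mul_assoc] at h
    exact h
  have s8 : ∀ x : R, a * (a' * (star a' * x)) = star a' * x := fun x => by
    have := congrArg (· * x) s8b
    simp only [mul_assoc] at this ⊢
    exact this
  have g1 : (a - b*b'*a) * (a' - a'*(b*b')) * (a - b*b'*a) = (a - b*b'*a) := by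
    simp only [sub_mul, mul_sub, add_mul, mul_add, star_mul, star_sub, star_add, star_star, star_one, one_mul, mul_one, mul_assoc, r1,r1b,r2,r2b,r3,r3b,r4,r4b,r5,r5b,r6,r6b,r7,r7b,r9,r9b,r10,r10b,s1,s1b,s2,s2b,s3,s3b,s4,s4b,s5,s5b,s5c,s5d,r11,r11b,r12,r12b,s6,s6b,s7,s7b,s8,s8b]
    try noncomm_ring
  have g2 : (a' - a'*(b*b')) * (a - b*b'*a) * (a' - a'*(b*b')) = (a' - a'*(b*b')) := by
    simp only [sub_mul, mul_sub, add_mul, mul_add, star_mul, star_sub, star_add, star_star, star_one, one_mul, mul_one, mul_assoc, r1,r1b,r2,r2b,r3,r3b,r4,r4b,r5,r5b,r6,r6b,r7,r7b,r9,r9b,r10,r10b,s1,s1b,s2,s2b,s3,s3b,s4,s4b,s5,s5b,s5c,s5d,r11,r11b,r12,r12b,s6,s6b,s7,s7b,s8,s8b]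
    try noncomm_ring
  have g3 : star ((a - b*b'*a) * (a' - a'*(b*b'))) = (a - b*b'*a) * (a' - a'*(b*b')) := by
    simp only [sub_mul, mul_sub, add_mul, mul_add, star_mul, star_sub, star_add, star_star, star_one, one_mul, mul_one, mul_assoc, r1,r1b,r2,r2b,r3,r3b,r4,r4b,r5,r5b,r6,r6b,r7,r7b,r9,r9b,r10,r10b,s1,s1b,s2,s2b,s3,s3b,s4,s4b,s5,s5b,s5c,s5d,r11,r11b,r12,r12b,s6,s6b,s7,s7b,s8,s8b]
    try noncomm_ring
  have g4 : star ((a' - a'*(b*b')) * (a - b*b'*a)) = (a' - a'*(b*b')) * (a - b*b'*a) := by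
    simp only [sub_mul, mul_sub, add_mul, mul_add, star_mul, star_sub, star_add, star_star, star_one, one_mul, mul_one, mul_assoc, r1,r1b,r2,r2b,r3,r3b,r4,r4b,r5,r5b,r6,r6b,r7,r7b,r9,r9b,r10,r10b,s1,s1b,s2,s2b,s3,s3b,s4,s4b,s5,s5b,s5c,s5d,r11,r11b,r12,r12b,s6,s6b,s7,s7b,s8,s8b]
    try noncomm_ring

  -- key algebraic identities
  have F4 : ∀ x : R, (a * a' + (1 - b * b') * a * (a' - a' * (b * b'))) * (a * x * star b + b * star x * star a) * (b * b')
      + star ((a * a' + (1 - b * b') * a * (a' - a' * (b * b'))) * (a * x * star b + b * star x * star a) * (b * b'))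
      = 2 * (a * x * star b + b * star x * star a) := by
    intro x
    simp only [sub_mul, mul_sub, add_mul, mul_add, star_mul, star_sub, star_add, star_star, star_one, one_mul, mul_one, mul_assoc, r1,r1b,r2,r2b,r3,r3b,r4,r4b,r5,r5b,r6,r6b,r7,r7b,r9,r9b,r10,r10b,s1,s1b,s2,s2b,s3,s3b,s4,s4b,s5,s5b,s5c,s5d,r11,r11b,r12,r12b,s6,s6b,s7,s7b,s8,s8b]
    try noncomm_ring
  have F1 : a * (a' * c * star b' - a' * b * b' * c * star (b' * a * (a' - a' * (b * b'))) + (a' - a' * (b * b')) * c * star b') * star b + b * star (a' * c * star b' - a' * b * b' * c * star (b' * a * (a' - a' * (b * b'))) + (a' - a' * (b * b')) * c * star b') * star a = (a * a' + (1 - b * b') * a * (a' - a' * (b * b'))) * c * (b * b') + star ((a * a' + (1 - b * b') * a * (a' - a' * (b * b'))) * c * (b * b')) := by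
    simp only [sub_mul, mul_sub, add_mul, mul_add, star_mul, star_sub, star_add, star_star, star_one, one_mul, mul_one, mul_assoc, r1,r1b,r2,r2b,r3,r3b,r4,r4b,r5,r5b,r6,r6b,r7,r7b,r9,r9b,r10,r10b,s1,s1b,s2,s2b,s3,s3b,s4,s4b,s5,s5b,s5c,s5d,r11,r11b,r12,r12b,s6,s6b,s7,s7b,s8,s8b]
    try noncomm_ring
  have F2 : ∀ v : R, a * (a' * a * v * (b' * b) + a' * b * star v * star a * star b' - a' * b * star v * star (b' * a * (a' - a' * (b * b')) * a) + (a' - a' * (b * b')) * a * v * (b' * b)) * star b + b * star (a' * a * v * (b' * b) + a' * b * star v * star a * star b' - a' * b * star v * star (b' * a * (a' - a' * (b * b')) * a) + (a' - a' * (b * b')) * a * v * (b' * b)) * star a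
      = 2 * (a * v * star b + b * star v * star a) := by
    intro v
    simp only [sub_mul, mul_sub, add_mul, mul_add, star_mul, star_sub, star_add, star_star, star_one, one_mul, mul_one, mul_assoc, r1,r1b,r2,r2b,r3,r3b,r4,r4b,r5,r5b,r6,r6b,r7,r7b,r9,r9b,r10,r10b,s1,s1b,s2,s2b,s3,s3b,s4,s4b,s5,s5b,s5c,s5d,r11,r11b,r12,r12b,s6,s6b,s7,s7b,s8,s8b]
    try noncomm_ring
  have F3 : ∀ y : R, (a' * a * y * (b' * b) + a' * b * star y * star a * star b' - a' * b * star y * star (b' * a * (a' - a' * (b * b')) * a) + (a' - a' * (b * b')) * a * y * (b' * b))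
      = a' * (a * y * star b + b * star y * star a) * star b'
        - a' * ((a * y * star b + b * star y * star a) * (star (a' - a' * (b * b')) * (star a * star b')))
        + (a' - a' * (b * b')) * ((a * y * star b + b * star y * star a) * star b') := by
    intro y
    simp only [sub_mul, mul_sub, add_mul, mul_add, star_mul, star_sub, star_add, star_star, star_one, one_mul, mul_one, mul_assoc, r1,r1b,r2,r2b,r3,r3b,r4,r4b,r5,r5b,r6,r6b,r7,r7b,r9,r9b,r10,r10b,s1,s1b,s2,s2b,s3,s3b,s4,s4b,s5,s5b,s5c,s5d,r11,r11b,r12,r12b,s6,s6b,s7,s7b,s8,s8b]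
    try noncomm_ring
  -- identify d and d'
  have hda : d = a - b * b' * a := by rw [hd]; noncomm_ring
  have hd' : d' = a' - a' * (b * b') := by
    refine mp_unique0 hd₂ hd₃ hd₄ ?_ ?_ ?_ hd₁ ?_
    · rw [hda]; exact g1
    · rw [hda]; exact g3
    · rw [hda]; exact g4
    · rw [hda]; exact g2
  subst hd'
  subst hd
  intro x₀' Φ'
  have hpullE : ∀ k : R, a * (u * k) * star b + b * star (u * k) * star a
      = u * (a * k * star b + b * star k * star a) := by
    intro k
    have t1 : a * (u * k) * star b = u * (a * k * star b) := by
      rw [hpull a k, mul_assoc, mul_assoc]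
    have t2 : b * star (u * k) * star a = u * (b * star k * star a) := by
      rw [star_mul, hsu, ← mul_assoc, ← hu_comm, mul_assoc, mul_assoc]
    rw [t1, t2, ← mul_add]
  have hx0eq : x₀' = u * (a' * c * star b' - a' * b * b' * c * star (b' * a * (a' - a' * (b * b'))) + (a' - a' * (b * b')) * c * star b') := by
    unfold x₀'
    noncomm_ring
  have hΦeq : ∀ v : R, Φ' v = v - u * (a' * a * v * (b' * b) + a' * b * star v * star a * star b' - a' * b * star v * star (b' * a * (a' - a' * (b * b')) * a) + (a' - a' * (b * b')) * a * v * (b' * b)) := by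
    intro v
    unfold Φ'
    beta_reduce
    noncomm_ring
  have hsol : ((a * a' + (1 - b * b') * a * (a' - a' * (b * b'))) * c * (b * b') + star ((a * a' + (1 - b * b') * a * (a' - a' * (b * b'))) * c * (b * b')) = 2 * c) → a * x₀' * star b + b * star x₀' * star a = c := by
    intro hcond
    rw [hx0eq, hpullE, F1, hcond, ← mul_assoc, hu₂, one_mul]
  have hEΦ : ∀ v : R, a * (Φ' v) * star b + b * star (Φ' v) * star a = 0 := by
    intro v
    rw [hΦeq v]
    have expand : a * (v - u * (a' * a * v * (b' * b) + a' * b * star v * star a * star b' - a' * b * star v * star (b' * a * (a' - a' * (b * b')) * a) + (a' - a' * (b * b')) * a * v * (b' * b))) * star b + b * star (v - u * (a' * a * v * (b' * b) + a' * b * star v * star a * star b' - a' * b * star v * star (b' * a * (a' - a' * (b * b')) * a) + (a' - a' * (b * b')) * a * v * (b' * b))) * star a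
        = (a * v * star b + b * star v * star a) - (a * (u * (a' * a * v * (b' * b) + a' * b * star v * star a * star b' - a' * b * star v * star (b' * a * (a' - a' * (b * b')) * a) + (a' - a' * (b * b')) * a * v * (b' * b))) * star b + b * star (u * (a' * a * v * (b' * b) + a' * b * star v * star a * star b' - a' * b * star v * star (b' * a * (a' - a' * (b * b')) * a) + (a' - a' * (b * b')) * a * v * (b' * b))) * star a) := by
      rw [star_sub]; noncomm_ring
    rw [expand, hpullE, F2 v, ← mul_assoc, hu₂, one_mul, sub_self]
  have hKfix : ∀ y : R, (a * y * star b + b * star y * star a) = 0 → Φ' y = y := by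
    intro y hy
    have hK0 : (a' * a * y * (b' * b) + a' * b * star y * star a * star b' - a' * b * star y * star (b' * a * (a' - a' * (b * b')) * a) + (a' - a' * (b * b')) * a * y * (b' * b)) = 0 := by
      rw [F3 y, hy]
      simp
    rw [hΦeq y, hK0, mul_zero, sub_zero]
  constructor
  · constructor
    · rintro ⟨x, hx⟩
      constructor
      · rw [← hx]
        simp only [star_add, star_mul, star_star, mul_assoc]
        abel
      · rw [← hx]
        exact F4 x
    · rintro ⟨hc, hcond⟩
      exact ⟨x₀', hsol hcond⟩
  · rintro ⟨hc, hcond⟩ x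
    constructor
    · intro hx
      refine ⟨x - x₀', ?_⟩
      have h0 : a * (x - x₀') * star b + b * star (x - x₀') * star a = 0 := by
        have expand : a * (x - x₀') * star b + b * star (x - x₀') * star a
            = (a * x * star b + b * star x * star a) - (a * x₀' * star b + b * star x₀' * star a) := by
          rw [star_sub]; noncomm_ring
        rw [expand, hx, hsol hcond, sub_self]
      rw [hKfix _ h0]
      abel
    · rintro ⟨v, rfl⟩
      have h1 := hsol hcond
      have h2 := hEΦ v
      calc a * (x₀' + Φ' v) * star b + b * star (x₀' + Φ' v) * star a
          = (a * x₀' * star b + b * star x₀' * star a)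
            + (a * (Φ' v) * star b + b * star (Φ' v) * star a) := by
            rw [star_add]; noncomm_ring
      _ = c + 0 := by rw [h1, h2]
      _ = c := add_zero c
end

section
/- Let R be a unital ring with involution in which 2 is invertible, and let a ∈ R be MP-invertible and b ∈ R. The equation xa* + ax* = b has a solution x ∈ R if and only if b* = b and (1-aa†)b(1-aa†) = 0. -/
/-- The equation x a* + a x* = b has a solution iff b* = b and
(1 - a a') b (1 - a a') = 0. Here u plays the role of 1/2. -/
theorem solvability_xa_plus_ax {R : Type*} [Ring R] [StarRing R] (a a' u b : R)
    (hu₁ : (2 : R) * u = 1) (hu₂ : u * (2 : R) = 1)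
    (ha₁ : a * a' * a = a) (ha₂ : a' * a * a' = a')
    (ha₃ : star (a * a') = a * a') (ha₄ : star (a' * a) = a' * a) :
    (∃ x : R, x * star a + a * star x = b) ↔
      (star b = b ∧ (1 - a * a') * b * (1 - a * a') = 0) := by
  have hpa : (1 - a * a') * a = 0 := by
    rw [sub_mul, one_mul, ha₁, sub_self]
  have hap : star a * (1 - a * a') = 0 := by
    have : star a * (a * a') = star a := by
      rw [← ha₃, ← star_mul, ha₁]
    rw [mul_sub, mul_one, this, sub_self]
  constructor
  · rintro ⟨x, hx⟩
    constructor
    · rw [← hx, star_add, star_mul, star_mul, star_star, star_star, add_comm]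
    · have key : (1 - a * a') * (x * star a + a * star x) * (1 - a * a') =
          (1 - a * a') * x * (star a * (1 - a * a')) +
            ((1 - a * a') * a) * (star x * (1 - a * a')) := by noncomm_ring
      rw [← hx, key, hap, hpa, mul_zero, zero_mul, add_zero]
  · rintro ⟨hb, hE⟩
    -- u is central and self-adjoint
    have h2c : ∀ r : R, r * 2 = 2 * r := fun r => by
      rw [two_mul, mul_two]
    have hucomm : ∀ r : R, u * r = r * u := fun r => by
      calc u * r = u * r * (2 * u) := by rw [hu₁, mul_one]
        _ = u * (r * 2) * u := by noncomm_ring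
        _ = u * (2 * r) * u := by rw [h2c]
        _ = (u * 2) * r * u := by noncomm_ring
        _ = r * u := by rw [hu₂, one_mul]
    have hustar : star u = u := by
      have h2s : (2 : R) * star u = 1 := by
        have := congrArg star hu₂
        rwa [star_mul, star_ofNat, star_one] at this
      calc star u = (u * 2) * star u := by rw [hu₂, one_mul]
        _ = u * (2 * star u) := by rw [mul_assoc]
        _ = u := by rw [h2s, mul_one]
    set p := a * a' with hp
    have hpp : p * p = p := by
      rw [hp]; calc a * a' * (a * a') = a * (a' * a * a') := by noncomm_ring
        _ = a * a' := by rw [ha₂]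
    have hps : p * star a' = star a' := by
      have : star (a' * (a * a')) = star a' := by
        rw [show a' * (a * a') = a' * a * a' by noncomm_ring, ha₂]
      rw [star_mul, ha₃] at this
      exact this
    have hsa : star a' * star a = p := by
      rw [← star_mul, ha₃]
    refine ⟨(u * p * b + (1 - p) * b) * star a', ?_⟩
    have hxsa : (u * p * b + (1 - p) * b) * star a' * star a =
        u * (p * b * p) + (1 - p) * b * p := by
      rw [mul_assoc, hsa]; noncomm_ring
    have hstarx : star ((u * p * b + (1 - p) * b) * star a') =
        a' * (b * (p * u) + b * (1 - p)) := by
      simp only [star_mul, star_add, star_sub, star_one, star_star, hb, hustar, ha₃]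
    have haxs : a * (a' * (b * (p * u) + b * (1 - p))) =
        u * (p * b * p) + p * b * (1 - p) := by
      have : a * (a' * (b * (p * u) + b * (1 - p))) =
          p * b * p * u + p * b * (1 - p) := by rw [hp]; noncomm_ring
      rw [this, ← hucomm]
    rw [hxsa, hstarx, haxs]
    have hsum : u * (p * b * p) + (1 - p) * b * p +
        (u * (p * b * p) + p * b * (1 - p)) =
        (2 * u) * (p * b * p) + (1 - p) * b * p + p * b * (1 - p) := by
      noncomm_ring
    rw [hsum, hu₁, one_mul]
    have : p * b * p + (1 - p) * b * p + p * b * (1 - p) =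
        b - (1 - p) * b * (1 - p) := by noncomm_ring
    rw [this, hE, sub_zero]
end

section
/- Let R be a unital ring with involution in which 2 is invertible, a MP-invertible, b ∈ R with b* = b and (1-aa†)b(1-aa†) = 0. Then for every v ∈ R, x = (1/2)(1 + E_a)(b(a†)* - va†a) + v - (1/2)av*(a†)* (where E_a = 1-aa†) satisfies xa* + ax* = b, and every solution of xa* + ax* = b has this form for some v. -/
/-- If b* = b and (1 - a a') b (1 - a a') = 0, then every x of the given form solves
x a* + a x* = b, and every solution of x a* + a x* = b has this form for some v.
Here u plays the role of 1/2 and 1 - a a' is E_a. -/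
theorem general_solution_xa_plus_ax {R : Type*} [Ring R] [StarRing R] (a a' u b : R)
    (hu₁ : (2 : R) * u = 1) (hu₂ : u * (2 : R) = 1)
    (ha₁ : a * a' * a = a) (ha₂ : a' * a * a' = a')
    (ha₃ : star (a * a') = a * a') (ha₄ : star (a' * a) = a' * a)
    (hb : star b = b) (hcond : (1 - a * a') * b * (1 - a * a') = 0) :
    let X : R → R := fun v =>
      u * ((1 + (1 - a * a')) * (b * star a' - v * (a' * a))) + v - u * (a * star v * star a')
    (∀ v : R, X v * star a + a * star (X v) = b) ∧
      (∀ x : R, x * star a + a * star x = b → ∃ v : R, x = X v) := by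
  intro X
  have hcomm : ∀ x : R, u * x = x * u := by
    intro x
    calc u * x = u * x * (2 * u) := by rw [hu₁, mul_one]
      _ = u * (x * 2) * u := by noncomm_ring
      _ = u * (2 * x) * u := by rw [mul_two, two_mul]
      _ = u * 2 * (x * u) := by noncomm_ring
      _ = x * u := by rw [hu₂, one_mul]
  have hcomm' : ∀ x : R, x * u = u * x := fun x => (hcomm x).symm
  have hpull : ∀ x y : R, x * (u * y) = u * (x * y) := by
    intro x y; rw [← mul_assoc, ← hcomm, mul_assoc]
  have hstaru : star u = u := by
    have h1 : star u * 2 = 1 := by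
      have := congrArg star hu₁
      simpa using this
    calc star u = star u * (2 * u) := by rw [hu₁, mul_one]
      _ = star u * 2 * u := by rw [mul_assoc]
      _ = u := by rw [h1, one_mul]
  have hcancel : ∀ c d : R, (2:R) * c = 2 * d → c = d := by
    intro c d h
    calc c = u * 2 * c := by rw [hu₂, one_mul]
      _ = u * (2 * c) := by rw [mul_assoc]
      _ = u * (2 * d) := by rw [h]
      _ = u * 2 * d := by rw [← mul_assoc]
      _ = d := by rw [hu₂, one_mul]
  have htwo : ∀ t : R, (2:R) * (u * t) = t := by
    intro t; rw [← mul_assoc, hu₁, one_mul]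
  have htwo' : ∀ t : R, u * ((2:R) * t) = t := by
    intro t; rw [← mul_assoc, hu₂, one_mul]
  -- rewrite rules
  have hs1 : star a' * star a = a * a' := by rw [← star_mul]; exact ha₃
  have hs1' : ∀ t : R, star a' * (star a * t) = a * (a' * t) := by
    intro t; rw [← mul_assoc, hs1, mul_assoc]
  have hs2 : star a * star a' = a' * a := by rw [← star_mul]; exact ha₄
  have hs2' : ∀ t : R, star a * (star a' * t) = a' * (a * t) := by
    intro t; rw [← mul_assoc, hs2, mul_assoc]
  have hf1 : a' * (a * star a) = star a := by
    rw [← mul_assoc, ← ha₄, ← star_mul, ← mul_assoc, ha₁]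
  have hf1' : ∀ t : R, a' * (a * (star a * t)) = star a * t := by
    intro t; rw [← mul_assoc a (star a) t, ← mul_assoc, hf1]
  have hea : a * (a' * a) = a := by rw [← mul_assoc]; exact ha₁
  have hea' : ∀ t : R, a * (a' * (a * t)) = a * t := by
    intro t; rw [← mul_assoc a' a t, ← mul_assoc, hea]
  have haa : a' * (a * a') = a' := by rw [← mul_assoc]; exact ha₂
  have haa' : ∀ t : R, a' * (a * (a' * t)) = a' * t := by
    intro t; rw [← mul_assoc a a' t, ← mul_assoc, haa]
  have hta : star a * (a * a') = star a := by
    rw [← ha₃, ← star_mul, ha₁]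
  have hta' : ∀ t : R, star a * (a * (a' * t)) = star a * t := by
    intro t; rw [← mul_assoc a a' t, ← mul_assoc, hta]
  have htb : a * (a' * star a') = star a' := by
    rw [← mul_assoc, ← ha₃, ← star_mul, haa]
  have htb' : ∀ t : R, a * (a' * (star a' * t)) = star a' * t := by
    intro t; rw [← mul_assoc a' (star a') t, ← mul_assoc, htb]
  have htc : star a' * (a' * a) = star a' := by
    rw [← ha₄, ← star_mul, ha₂]
  have htc' : ∀ t : R, star a' * (a' * (a * t)) = star a' * t := by
    intro t; rw [← mul_assoc a' a t, ← mul_assoc, htc]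
  -- the condition, rearranged
  have hE : b * (a * a') + a * (a' * b) - a * (a' * (b * (a * a'))) = b := by
    have h0 : b - (b * (a * a') + a * (a' * b) - a * (a' * (b * (a * a'))))
        = (1 - a * a') * b * (1 - a * a') := by noncomm_ring
    rw [hcond] at h0
    exact (sub_eq_zero.mp h0).symm
  have hE2 : (2:R) * b = 2 * (b * (a * a')) + 2 * (a * (a' * b))
      - 2 * (a * (a' * (b * (a * a')))) := by
    have h0 : 2 * b - (2 * (b * (a * a')) + 2 * (a * (a' * b))
        - 2 * (a * (a' * (b * (a * a')))))
        = 2 * ((1 - a * a') * b * (1 - a * a')) := by noncomm_ring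
    rw [hcond, mul_zero] at h0
    exact sub_eq_zero.mp h0
  constructor
  · intro v
    apply hcancel
    simp only [X]
    rw [hE2]
    simp only [star_add, star_sub, star_mul, star_star, star_one, hstaru, hb,
      mul_add, add_mul, mul_sub, sub_mul, mul_assoc, one_mul, mul_one,
      hcomm', hpull, htwo, htwo', hs1, hs1', hs2, hs2', hf1, hf1', hea, hea', haa, haa',
      hta, hta', htb, htb', htc, htc']
    noncomm_ring
  · intro x hx
    refine ⟨x, ?_⟩
    apply hcancel
    simp only [X]
    rw [← hx]
    simp only [star_add, star_sub, star_mul, star_star, star_one, hstaru,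
      mul_add, add_mul, mul_sub, sub_mul, mul_assoc, one_mul, mul_one,
      hcomm', hpull, htwo, htwo', hs1, hs1', hs2, hs2', hf1, hf1', hea, hea', haa, haa',
      hta, hta', htb, htb', htc, htc']
    noncomm_ring
end

section
/- Let R be a unital ring with involution in which 2 is invertible, and let a ∈ R be MP-invertible and b ∈ R. The equation a*x + x*a = b has a solution x ∈ R if and only if b* = b and (1-a†a)b(1-a†a) = 0. In that case the general solution is x = (1/2)((a†)*b - aa†w)(1 + F_a) + w - (1/2)(a†)*w*a for arbitrary w, where F_a = 1 - a†a. -/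
/-- a* x + x* a = b has a solution iff b* = b and (1 - a' a) b (1 - a' a) = 0, in which
case the general solution is x = (1/2)((a')* b - a a' w)(1 + F_a) + w - (1/2)(a')* w* a,
where F_a = 1 - a' a and u plays the role of 1/2. -/
theorem general_solution_astar_x {R : Type*} [Ring R] [StarRing R] (a a' u b : R)
    (hu₁ : (2 : R) * u = 1) (hu₂ : u * (2 : R) = 1)
    (ha₁ : a * a' * a = a) (ha₂ : a' * a * a' = a')
    (ha₃ : star (a * a') = a * a') (ha₄ : star (a' * a) = a' * a) :
    let X : R → R := fun w =>
      u * ((star a' * b - a * a' * w) * (1 + (1 - a' * a))) + w - u * (star a' * star w * a)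
    ((∃ x : R, star a * x + star x * a = b) ↔
      (star b = b ∧ (1 - a' * a) * b * (1 - a' * a) = 0)) ∧
    ((star b = b ∧ (1 - a' * a) * b * (1 - a' * a) = 0) →
      ∀ x : R, (star a * x + star x * a = b ↔ ∃ w : R, x = X w)) := by
  intro X
  have hXdef : ∀ w, X w = u * ((star a' * b - a * a' * w) * (1 + (1 - a' * a))) + w
      - u * (star a' * star w * a) := fun _ => rfl
  -- 2 is central
  have c2 : ∀ x : R, (2:R) * x = x * 2 := fun x => by rw [two_mul, mul_two]
  have huu : ∀ x : R, u * (2 * x) = x := fun x => by rw [← mul_assoc, hu₂, one_mul]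
  have cancel2 : ∀ c d : R, (2:R) * c = 2 * d → c = d := fun c d h => by
    rw [← huu c, h, huu]
  have hs2 : ∀ c : R, star ((2:R) * c) = 2 * star c := fun c => by
    rw [star_mul, show star (2:R) = 2 by simp, ← c2]
  have hsu : star u = u := by
    have h3 : star u * 2 = 1 := by
      calc star u * 2 = star (2 * u) := by rw [star_mul, show star (2:R) = 2 by simp]
      _ = 1 := by rw [hu₁, star_one]
    calc star u = star u * (2 * u) := by rw [hu₁, mul_one]
    _ = u := by rw [← mul_assoc, h3, one_mul]
  -- star identities
  have h1 : star a * (a * a') = star a := by rw [← ha₃, ← star_mul, ha₁]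
  have h2 : a' * a * star a = star a := by rw [← ha₄, ← star_mul, ← mul_assoc, ha₁]
  have h3 : star a * star a' = a' * a := by rw [← star_mul, ha₄]
  have h4 : star a' * star a = a * a' := by rw [← star_mul, ha₃]
  -- right-associated rewrite rules
  have r1 : ∀ t, star a * (star a' * t) = a' * (a * t) := fun t => by
    rw [← mul_assoc, h3, mul_assoc]
  have r2 : ∀ t, star a * (a * (a' * t)) = star a * t := fun t => by
    rw [show a * (a' * t) = (a * a') * t from (mul_assoc _ _ _).symm, ← mul_assoc, h1]
  have r3 : ∀ t, a' * (a * (star a * t)) = star a * t := fun t => by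
    rw [show a * (star a * t) = (a * star a) * t from (mul_assoc _ _ _).symm,
      ← mul_assoc, ← mul_assoc, h2]
  have r4 : ∀ t, star a' * (star a * t) = a * (a' * t) := fun t => by
    rw [← mul_assoc, h4, mul_assoc]
  have r5 : ∀ t, a * (a' * (a * t)) = a * t := fun t => by
    rw [← mul_assoc, ← mul_assoc, ha₁]
  have r6 : ∀ t, a' * (a * (a' * t)) = a' * t := fun t => by
    rw [← mul_assoc, ← mul_assoc, ha₂]
  have r2' : star a * (a * a') = star a := h1
  have r3' : a' * (a * star a) = star a := by rw [← mul_assoc, h2]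
  have r5' : a * (a' * a) = a := by rw [← mul_assoc, ha₁]
  have r6' : a' * (a * a') = a' := by rw [← mul_assoc, ha₂]
  -- doubled X
  have h2X : ∀ w, 2 * X w = (star a' * b - a * a' * w) * (1 + (1 - a' * a)) + 2 * w
      - star a' * star w * a := by
    intro w
    rw [hXdef, mul_sub, mul_add, ← mul_assoc, hu₁, one_mul, ← mul_assoc, hu₁, one_mul]
  -- forward direction
  have forward : ∀ x : R, star a * x + star x * a = b →
      star b = b ∧ (1 - a' * a) * b * (1 - a' * a) = 0 := by
    intro x hx
    constructor
    · rw [← hx, star_add, star_mul, star_mul, star_star, star_star, add_comm]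
    · have z1 : (1 - a' * a) * star a = 0 := by rw [sub_mul, one_mul, h2, sub_self]
      have z2 : a * (1 - a' * a) = 0 := by rw [mul_sub, mul_one, ← mul_assoc, ha₁, sub_self]
      rw [← hx]
      calc (1 - a' * a) * (star a * x + star x * a) * (1 - a' * a)
          = ((1 - a' * a) * star a) * (x * (1 - a' * a))
            + ((1 - a' * a) * star x) * (a * (1 - a' * a)) := by noncomm_ring
        _ = 0 := by rw [z1, z2, zero_mul, mul_zero, add_zero]
  -- X w is always a solution under the conditions
  have hsol : star b = b → (1 - a' * a) * b * (1 - a' * a) = 0 →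
      ∀ w, star a * X w + star (X w) * a = b := by
    intro hb h0 w
    have hb2 : a' * a * b + b * (a' * a) - a' * a * b * (a' * a) = b := by
      have key : b - (a' * a * b + b * (a' * a) - a' * a * b * (a' * a))
          = (1 - a' * a) * b * (1 - a' * a) := by noncomm_ring
      have := key.trans h0
      rw [sub_eq_zero] at this
      exact this.symm
    refine cancel2 _ _ ?_
    calc 2 * (star a * X w + star (X w) * a)
        = 2 * (star a * X w) + 2 * (star (X w) * a) := by rw [mul_add]
      _ = star a * (2 * X w) + (2 * star (X w)) * a := by
          rw [show (2:R) * (star a * X w) = star a * (2 * X w) by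
                rw [← mul_assoc, c2, mul_assoc],
              show (2:R) * (star (X w) * a) = (2 * star (X w)) * a from (mul_assoc _ _ _).symm]
      _ = star a * (2 * X w) + star (2 * X w) * a := by rw [hs2]
      _ = 2 * b := by
          rw [h2X w]
          simp only [star_sub, star_add, star_mul, star_one, star_star, hs2, hb,
            mul_add, add_mul, mul_sub, sub_mul, mul_one, one_mul, mul_assoc,
            r1, r2, r3, r4, r5, r6, r2', r3', r5', r6']
          conv_rhs => rw [← hb2]
          noncomm_ring
  -- a solution x equals X x
  have hXx : ∀ x : R, star a * x + star x * a = b → x = X x := by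
    intro x hx
    refine cancel2 _ _ ?_
    rw [h2X x, ← hx]
    simp only [star_sub, star_add, star_mul, star_one, star_star,
      mul_add, add_mul, mul_sub, sub_mul, mul_one, one_mul, mul_assoc,
      r1, r2, r3, r4, r5, r6, r2', r3', r5', r6']
    noncomm_ring
  refine ⟨⟨fun ⟨x, hx⟩ => forward x hx, fun ⟨hb, h0⟩ => ⟨X 0, hsol hb h0 0⟩⟩, ?_⟩
  rintro ⟨hb, h0⟩ x
  exact ⟨fun hx => ⟨x, hXx x hx⟩, fun ⟨w, hw⟩ => hw ▸ hsol hb h0 w⟩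
end

section
/- Let A be an m×n matrix, B a p×m matrix, C an m×m matrix over a ring R with involution, and let k = m+n+p. Embed a, b, c into R^{k×k} as block matrices with A in the (1,2) block, B in the (1,3) block, and C in the (1,1) block respectively (all other blocks zero). Then AXB* - BX*A* = C has a solution X ∈ R^{n×p} if and only if axb* - bx*a* = c has a solution x ∈ R^{k×k}; moreover x may be taken to be the block matrix with X in the (2,3) block and zeros elsewhere. -/
open Matrix

lemma key_calc {R : Type*} [Ring R] [StarRing R] {m n p : ℕ}
    (A : Matrix (Fin m) (Fin n) R) (B : Matrix (Fin m) (Fin p) R)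
    (x : Matrix (Fin m ⊕ (Fin n ⊕ Fin p)) (Fin m ⊕ (Fin n ⊕ Fin p)) R) :
    (Matrix.fromBlocks 0 (Matrix.fromCols A 0) 0 0) * x *
      (Matrix.fromBlocks 0 (Matrix.fromCols 0 B) 0 0)ᴴ -
    (Matrix.fromBlocks 0 (Matrix.fromCols 0 B) 0 0) * xᴴ *
      (Matrix.fromBlocks 0 (Matrix.fromCols A 0) 0 0)ᴴ =
    Matrix.fromBlocks
      (A * (x.toBlocks₂₂.toBlocks₁₂) * Bᴴ - B * (x.toBlocks₂₂.toBlocks₁₂)ᴴ * Aᴴ) 0 0 0 := by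
  set Y := x.toBlocks₂₂.toBlocks₁₂ with hY
  nth_rewrite 1 2 [← fromBlocks_toBlocks x]
  nth_rewrite 1 2 [← fromBlocks_toBlocks x.toBlocks₂₂]
  simp [fromBlocks_conjTranspose, conjTranspose_fromCols_eq_fromRows_conjTranspose,
    fromBlocks_multiply, fromCols_mul_fromBlocks, fromBlocks_mul_fromRows,
    fromCols_mul_fromRows, fromBlocks_smul, ← hY, sub_eq_add_neg, fromBlocks_add, fromBlocks_neg]

/-- Embedding of rectangular matrices into the ring of square matrices of order
k = m + n + p (indexed by Fin m ⊕ Fin n ⊕ Fin p): A X B* - B X* A* = C has a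
solution X iff the embedded equation a x b* - b x* a* = c has a solution x;
moreover, the embedding of any solution X is a solution x. -/
theorem matrix_embedding_equivalence {R : Type*} [Ring R] [StarRing R]
    {m n p : ℕ}
    (A : Matrix (Fin m) (Fin n) R) (B : Matrix (Fin m) (Fin p) R)
    (C : Matrix (Fin m) (Fin m) R) :
    let a : Matrix (Fin m ⊕ (Fin n ⊕ Fin p)) (Fin m ⊕ (Fin n ⊕ Fin p)) R :=
      Matrix.fromBlocks 0 (Matrix.fromCols A 0) 0 0
    let b : Matrix (Fin m ⊕ (Fin n ⊕ Fin p)) (Fin m ⊕ (Fin n ⊕ Fin p)) R :=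
      Matrix.fromBlocks 0 (Matrix.fromCols 0 B) 0 0
    let c : Matrix (Fin m ⊕ (Fin n ⊕ Fin p)) (Fin m ⊕ (Fin n ⊕ Fin p)) R :=
      Matrix.fromBlocks C 0 0 0
    let embed : Matrix (Fin n) (Fin p) R →
        Matrix (Fin m ⊕ (Fin n ⊕ Fin p)) (Fin m ⊕ (Fin n ⊕ Fin p)) R :=
      fun X => Matrix.fromBlocks 0 0 0 (Matrix.fromBlocks 0 X 0 0)
    ((∃ X : Matrix (Fin n) (Fin p) R, A * X * Bᴴ - B * Xᴴ * Aᴴ = C) ↔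
      (∃ x : Matrix (Fin m ⊕ (Fin n ⊕ Fin p)) (Fin m ⊕ (Fin n ⊕ Fin p)) R,
        a * x * bᴴ - b * xᴴ * aᴴ = c)) ∧
    (∀ X : Matrix (Fin n) (Fin p) R, A * X * Bᴴ - B * Xᴴ * Aᴴ = C →
      a * embed X * bᴴ - b * (embed X)ᴴ * aᴴ = c) := by
  intro a b c embed
  have hemb : ∀ X : Matrix (Fin n) (Fin p) R, A * X * Bᴴ - B * Xᴴ * Aᴴ = C →
      a * embed X * bᴴ - b * (embed X)ᴴ * aᴴ = c := by
    intro X hX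
    have := key_calc A B (embed X)
    simpa [a, b, c, embed, toBlocks_fromBlocks₂₂, toBlocks_fromBlocks₁₂, hX] using this
  refine ⟨⟨fun ⟨X, hX⟩ => ⟨embed X, hemb X hX⟩, fun ⟨x, hx⟩ => ?_⟩, hemb⟩
  refine ⟨x.toBlocks₂₂.toBlocks₁₂, ?_⟩
  have := (key_calc A B x).symm.trans hx
  have h11 := congrArg Matrix.toBlocks₁₁ this
  simpa [c] using h11
end

section
/- Let A : H₃ → H₂, B : H₁ → H₂, C : H₂ → H₂ be adjointable operators between Hilbert C*-modules such that A and B have closed range, range(B) ⊆ range(A), and D = (1 - BB†)A has closed range. Then AXB* - BX*A* = C has a solution X ∈ L(H₁,H₃) if and only if C* = -C and (AA† + DD†)CBB† - ((AA† + DD†)CBB†)* = 2C. -/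
open ContinuousLinearMap

set_option maxHeartbeats 1000000 in
/-- Solvability criterion for A X B* - B X* A* = C for operators between Hilbert
spaces (Hilbert C*-modules over the C*-algebra of complex numbers): if A, B have
closed range, range B is contained in range A, and D = (1 - B B') A has closed
range, where A', B', D' denote the Moore-Penrose inverses (characterized by the
four Penrose equations), then the equation has a solution X iff C* = -C and
(A A' + D D') C B B' - ((A A' + D D') C B B')* = 2 C. -/
theorem operator_equation_solvability
    {H₁ H₂ H₃ : Type*}
    [NormedAddCommGroup H₁] [InnerProductSpace ℂ H₁] [CompleteSpace H₁]
    [NormedAddCommGroup H₂] [InnerProductSpace ℂ H₂] [CompleteSpace H₂]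
    [NormedAddCommGroup H₃] [InnerProductSpace ℂ H₃] [CompleteSpace H₃]
    (A : H₃ →L[ℂ] H₂) (B : H₁ →L[ℂ] H₂) (C : H₂ →L[ℂ] H₂)
    (A' : H₂ →L[ℂ] H₃) (B' : H₂ →L[ℂ] H₁) (D' : H₂ →L[ℂ] H₃)
    (hAcl : IsClosed (Set.range A)) (hBcl : IsClosed (Set.range B))
    (hrange : Set.range B ⊆ Set.range A)
    (hA₁ : A ∘L A' ∘L A = A) (hA₂ : A' ∘L A ∘L A' = A')
    (hA₃ : adjoint (A ∘L A') = A ∘L A') (hA₄ : adjoint (A' ∘L A) = A' ∘L A)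
    (hB₁ : B ∘L B' ∘L B = B) (hB₂ : B' ∘L B ∘L B' = B')
    (hB₃ : adjoint (B ∘L B') = B ∘L B') (hB₄ : adjoint (B' ∘L B) = B' ∘L B)
    (D : H₃ →L[ℂ] H₂) (hD : D = A - B ∘L B' ∘L A)
    (hDcl : IsClosed (Set.range D))
    (hD₁ : D ∘L D' ∘L D = D) (hD₂ : D' ∘L D ∘L D' = D')
    (hD₃ : adjoint (D ∘L D') = D ∘L D') (hD₄ : adjoint (D' ∘L D) = D' ∘L D) :
    (∃ X : H₁ →L[ℂ] H₃, A ∘L X ∘L adjoint B - B ∘L adjoint X ∘L adjoint A = C) ↔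
      (adjoint C = -C ∧
        (A ∘L A' + D ∘L D') ∘L C ∘L (B ∘L B')
          - adjoint ((A ∘L A' + D ∘L D') ∘L C ∘L (B ∘L B')) = 2 • C) := by
  -- pointwise Moore–Penrose identities
  have p1 : ∀ z, A (A' (A z)) = A z := fun z => by
    have := DFunLike.congr_fun hA₁ z; simpa using this
  have p3 : ∀ z, B (B' (B z)) = B z := fun z => by
    have := DFunLike.congr_fun hB₁ z; simpa using this
  have p5 : ∀ z, D (D' (D z)) = D z := fun z => by
    have := DFunLike.congr_fun hD₁ z; simpa using this
  have p16 : ∀ z, adjoint B' (adjoint B z) = B (B' z) := fun z => by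
    have := DFunLike.congr_fun hB₃ z
    rw [adjoint_comp] at this; simpa using this
  have p17 : ∀ z, adjoint A' (adjoint A z) = A (A' z) := fun z => by
    have := DFunLike.congr_fun hA₃ z
    rw [adjoint_comp] at this; simpa using this
  have p6 : ∀ z, A (A' (B z)) = B z := fun z => by
    obtain ⟨y, hy⟩ := hrange (Set.mem_range_self z)
    rw [← hy, p1]
  have pQD : ∀ z, B (B' (D z)) = 0 := fun z => by
    simp [hD, map_sub, p3]
  have hQE_op : (B ∘L B') ∘L (D ∘L D') = 0 := by
    ext z; simpa using pQD (D' z)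
  have hEQ_op : (D ∘L D') ∘L (B ∘L B') = 0 := by
    have h := congrArg (fun f => adjoint f) hQE_op
    simpa [adjoint_comp, hB₃, hD₃] using h
  have pEQ : ∀ z, D (D' (B (B' z))) = 0 := fun z => by
    have := DFunLike.congr_fun hEQ_op z; simpa using this
  have pEB : ∀ z, D (D' (B z)) = 0 := fun z => by
    rw [← p3 z]; exact pEQ (B z)
  have p7 : ∀ z, D (D' (A z)) = D z := fun z => by
    have hz : A z = D z + B (B' (A z)) := by simp [hD]
    rw [hz, map_add, map_add, p5, pEB, add_zero]
  have p10 : ∀ z, A (A' (D z)) = D z := fun z => by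
    simp [hD, map_sub, p1, p6]
  have hPE_op : (A ∘L A') ∘L (D ∘L D') = D ∘L D' := by
    ext z; simpa using p10 (D' z)
  have hEP_op : (D ∘L D') ∘L (A ∘L A') = D ∘L D' := by
    have h := congrArg (fun f => adjoint f) hPE_op
    simpa [adjoint_comp, hA₃, hD₃] using h
  have p18 : ∀ z, D (A' z) = D (D' z) := fun z => by
    have h := DFunLike.congr_fun hEP_op z
    simp only [comp_apply] at h
    exact (p7 (A' z)).symm.trans h
  have hQB_op : (B ∘L B') ∘L B = B := by rw [comp_assoc]; exact hB₁
  have p11 : ∀ z, adjoint B (B (B' z)) = adjoint B z := fun z => by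
    have h := congrArg (fun f => adjoint f) hQB_op
    simp only [adjoint_comp, hB₃] at h
    have := DFunLike.congr_fun h z; simpa using this
  have hPB_op : (A ∘L A') ∘L B = B := by ext z; simpa using p6 z
  have p12 : ∀ z, adjoint B (A (A' z)) = adjoint B z := fun z => by
    have h := congrArg (fun f => adjoint f) hPB_op
    simp only [adjoint_comp, hA₃] at h
    have := DFunLike.congr_fun h z; simpa using this
  have hEB_op : (D ∘L D') ∘L B = 0 := by ext z; simpa using pEB z
  have p13 : ∀ z, adjoint B (D (D' z)) = 0 := fun z => by
    have h := congrArg (fun f => adjoint f) hEB_op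
    simp only [adjoint_comp, hD₃] at h
    have := DFunLike.congr_fun h z; simpa using this
  have hPA_op : (A ∘L A') ∘L A = A := by rw [comp_assoc]; exact hA₁
  have p14 : ∀ z, adjoint A (A (A' z)) = adjoint A z := fun z => by
    have h := congrArg (fun f => adjoint f) hPA_op
    simp only [adjoint_comp, hA₃] at h
    have := DFunLike.congr_fun h z; simpa using this
  have hEA_op : (D ∘L D') ∘L A = D := by ext z; simpa using p7 z
  have p15 : ∀ z, adjoint A (D (D' z)) = adjoint D z := fun z => by
    have h := congrArg (fun f => adjoint f) hEA_op
    simp only [adjoint_comp, hD₃] at h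
    have := DFunLike.congr_fun h z; simpa using this
  have pD : ∀ z, D z = A z - B (B' (A z)) := fun z => by simp [hD]
  have pDadj : ∀ z, adjoint D z = adjoint A z - adjoint A (B (B' z)) := by
    have hop : adjoint D = adjoint A - adjoint A ∘L (B ∘L B') := by
      rw [hD]
      simp only [map_sub, adjoint_comp]
      rw [comp_assoc, ← adjoint_comp, hB₃]
    intro z
    have := DFunLike.congr_fun hop z; simpa using this
  constructor
  · rintro ⟨X, rfl⟩
    have hadjS : adjoint (A ∘L X ∘L adjoint B - B ∘L adjoint X ∘L adjoint A)
        = -(A ∘L X ∘L adjoint B - B ∘L adjoint X ∘L adjoint A) := by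
      simp only [map_sub, adjoint_comp, adjoint_adjoint, neg_sub]
      rw [comp_assoc, comp_assoc]
    refine ⟨hadjS, ?_⟩
    have hadjT : adjoint ((A ∘L A' + D ∘L D') ∘L
          (A ∘L X ∘L adjoint B - B ∘L adjoint X ∘L adjoint A) ∘L (B ∘L B'))
        = ((B ∘L B') ∘L (-(A ∘L X ∘L adjoint B - B ∘L adjoint X ∘L adjoint A)))
            ∘L (A ∘L A' + D ∘L D') := by
      rw [adjoint_comp, adjoint_comp, hadjS, hB₃, map_add, hA₃, hD₃, comp_assoc]
    rw [hadjT]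
    ext x
    simp only [ContinuousLinearMap.sub_apply, ContinuousLinearMap.add_apply,
      ContinuousLinearMap.comp_apply, ContinuousLinearMap.smul_apply,
      ContinuousLinearMap.neg_apply, map_add, map_sub, map_neg, map_zero,
      p1, p3, p5, p6, p7, p10, p11, p12, p13, p14, p15, p16, p17, p18, pEB, pEQ, pQD]
    simp only [pD, pDadj, map_sub]
    abel
  · rintro ⟨hC1, hC2⟩
    refine ⟨(2⁻¹ : ℂ) • (A' ∘L ((A ∘L A' + D ∘L D') ∘L (C ∘L adjoint B'))), ?_⟩
    have hadjW : adjoint (A' ∘L ((A ∘L A' + D ∘L D') ∘L (C ∘L adjoint B')))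
        = ((B' ∘L (-C)) ∘L (A ∘L A' + D ∘L D')) ∘L adjoint A' := by
      rw [adjoint_comp, adjoint_comp, adjoint_comp, adjoint_adjoint, hC1, map_add, hA₃, hD₃]
    have hv1 : A ∘L (A' ∘L ((A ∘L A' + D ∘L D') ∘L (C ∘L adjoint B'))) ∘L adjoint B
        = (A ∘L A' + D ∘L D') ∘L C ∘L (B ∘L B') := by
      ext x
      simp only [ContinuousLinearMap.comp_apply, ContinuousLinearMap.add_apply,
        map_add, p1, p10, p16]
    have hv2 : B ∘L (((B' ∘L (-C)) ∘L (A ∘L A' + D ∘L D')) ∘L adjoint A') ∘L adjoint A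
        = (B ∘L B') ∘L ((-C) ∘L (A ∘L A' + D ∘L D')) := by
      ext x
      simp only [ContinuousLinearMap.comp_apply, ContinuousLinearMap.add_apply,
        ContinuousLinearMap.neg_apply, map_add, map_neg, p17, p1, p7, p18]
    have hT : adjoint ((A ∘L A' + D ∘L D') ∘L C ∘L (B ∘L B'))
        = (B ∘L B') ∘L ((-C) ∘L (A ∘L A' + D ∘L D')) := by
      rw [adjoint_comp, adjoint_comp, hC1, hB₃, map_add, hA₃, hD₃, comp_assoc]
    rw [hT] at hC2
    rw [LinearIsometryEquiv.map_smulₛₗ]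
    have hconj : (starRingEnd ℂ) (2⁻¹ : ℂ) = (2⁻¹ : ℂ) := by simp [Complex.conj_ofNat]
    rw [hconj, hadjW, smul_comp, comp_smul, smul_comp, comp_smul, hv1, hv2,
      ← smul_sub, hC2]
    rw [two_smul, smul_add]
    rw [← add_smul]
    norm_num
end
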